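/- arXiv:1707.01644 — 2 statements merged into one kernel-verified Lean document; each statement's English description precedes it below -/
import Mathlib

section
/- Let φ : ℝ^n → ℝ be smooth, let u : (0,∞) × ℝ^n → ℝ be a smooth positive solution of ∂ₜu = Lu, and set f = log u. Then the pointwise identity (L − ∂ₜ)(∂ₜf) = −4∇²f(∇f, ∇f) − 2⟨∇(Lf), ∇f⟩ holds on (0,∞) × ℝ^n. (Euclidean case of the evolution identity for f_t = ∂ₜ log u established in the proof of the paper's Theorem 2.1.) -/
open scoped RealInnerProductSpace ContDiff

noncomputable section

/-- Hessian of `f` at `x`, evaluated at the pair of vectors `(v, w)`. -/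
def hess (n : ℕ) (f : EuclideanSpace ℝ (Fin n) → ℝ) (x v w : EuclideanSpace ℝ (Fin n)) : ℝ :=
  fderiv ℝ (fun y => fderiv ℝ f y v) x w

/-- Laplacian `Δf = tr ∇²f`. -/
def lap (n : ℕ) (f : EuclideanSpace ℝ (Fin n) → ℝ) (x : EuclideanSpace ℝ (Fin n)) : ℝ :=
  ∑ i : Fin n, hess n f x (EuclideanSpace.single i 1) (EuclideanSpace.single i 1)

/-- Witten Laplacian `Lf = Δf − ⟨∇φ, ∇f⟩`. -/
def witten (n : ℕ) (φ f : EuclideanSpace ℝ (Fin n) → ℝ) (x : EuclideanSpace ℝ (Fin n)) : ℝ :=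
  lap n f x - ⟪gradient φ x, gradient f x⟫

/-- Squared Frobenius norm of the Hessian. -/
def hessNormSq (n : ℕ) (f : EuclideanSpace ℝ (Fin n) → ℝ) (x : EuclideanSpace ℝ (Fin n)) : ℝ :=
  ∑ i : Fin n, ∑ j : Fin n,
    (hess n f x (EuclideanSpace.single i 1) (EuclideanSpace.single j 1)) ^ 2

/-- The `CD(−K, m)` condition on Euclidean space `ℝⁿ`:
`∇²φ(v,v) − ⟨∇φ, v⟩²/(m−n) ≥ −K|v|²` at every point and for every vector. -/
def CDcond (n : ℕ) (φ : EuclideanSpace ℝ (Fin n) → ℝ) (m K : ℝ) : Prop :=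
  ∀ x v : EuclideanSpace ℝ (Fin n),
    hess n φ x v v - ⟪gradient φ x, v⟫ ^ 2 / (m - n) ≥ -K * ‖v‖ ^ 2


section Aux

variable {Z : Type*} [NormedAddCommGroup Z] [NormedSpace ℝ Z]

/-- Directional derivative operator. -/
def DD (G : Z → ℝ) (v : Z) : Z → ℝ := fun p => fderiv ℝ G p v

lemma DD_contDiffOn {G : Z → ℝ} {U : Set Z} (hU : IsOpen U)
    (hG : ContDiffOn ℝ ∞ G U) (v : Z) : ContDiffOn ℝ ∞ (DD G v) U :=
  (hG.fderiv_of_isOpen (m := ∞) hU (by simp)).clm_apply contDiffOn_const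

lemma dA {G : Z → ℝ} {U : Set Z} (hU : IsOpen U)
    (hG : ContDiffOn ℝ ∞ G U) {p : Z} (hp : p ∈ U) : DifferentiableAt ℝ G p :=
  (hG.contDiffAt (hU.mem_nhds hp)).differentiableAt (by simp)

lemma DD_comm {G : Z → ℝ} {U : Set Z} (hU : IsOpen U)
    (hG : ContDiffOn ℝ ∞ G U) {p : Z} (hp : p ∈ U) (v w : Z) :
    DD (DD G v) w p = DD (DD G w) v p := by
  have hat : ContDiffAt ℝ ∞ G p := hG.contDiffAt (hU.mem_nhds hp)
  have hsym := hat.isSymmSndFDerivAt (by simp; exact WithTop.coe_le_coe.mpr le_top)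
  have hd : DifferentiableAt ℝ (fderiv ℝ G) p :=
    (hat.fderiv_right (m := ∞) (by simp)).differentiableAt (by simp)
  have key : ∀ a b : Z, DD (DD G a) b p = fderiv ℝ (fderiv ℝ G) p b a := by
    intro a b
    have h := fderiv_clm_apply (𝕜 := ℝ) (c := fderiv ℝ G) (u := fun _ => a) hd
      (differentiableAt_const _)
    show fderiv ℝ (fun q => (fderiv ℝ G q) a) p b = _
    rw [h]
    simp
  rw [key, key, hsym w v]

end Aux

section Slice

variable {X : Type*} [NormedAddCommGroup X] [NormedSpace ℝ X]

lemma fderiv_slice_x {G : ℝ × X → ℝ} {t : ℝ} {x : X}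
    (hG : DifferentiableAt ℝ G (t, x)) (v : X) :
    fderiv ℝ (fun y => G (t, y)) x v = fderiv ℝ G (t, x) (0, v) := by
  have h : HasFDerivAt (fun y => G (t, y))
      ((fderiv ℝ G (t, x)).comp (ContinuousLinearMap.inr ℝ ℝ X)) x :=
    hG.hasFDerivAt.comp x (hasFDerivAt_prodMk_right t x)
  rw [h.fderiv]; rfl

lemma deriv_slice_t {G : ℝ × X → ℝ} {t : ℝ} {x : X}
    (hG : DifferentiableAt ℝ G (t, x)) :
    deriv (fun s => G (s, x)) t = fderiv ℝ G (t, x) (1, 0) := by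
  have h : HasFDerivAt (fun s : ℝ => G (s, x))
      ((fderiv ℝ G (t, x)).comp (ContinuousLinearMap.inl ℝ ℝ X)) t :=
    hG.hasFDerivAt.comp t (hasFDerivAt_prodMk_left t x)
  rw [h.hasDerivAt.deriv]; rfl

lemma fderiv_indep {h : X → ℝ} {t : ℝ} {x : X} (hh : DifferentiableAt ℝ h x) (w : ℝ × X) :
    fderiv ℝ (fun p : ℝ × X => h p.2) (t, x) w = fderiv ℝ h x w.2 := by
  have h1 : HasFDerivAt (fun p : ℝ × X => h p.2)
      ((fderiv ℝ h x).comp (ContinuousLinearMap.snd ℝ ℝ X)) (t, x) :=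
    hh.hasFDerivAt.comp _ hasFDerivAt_snd
  rw [h1.fderiv]; rfl

lemma contDiff_slice {G : ℝ × X → ℝ} {U : Set (ℝ × X)} (hU : IsOpen U)
    (hG : ContDiffOn ℝ ∞ G U) {t : ℝ} (ht : ∀ y : X, (t, y) ∈ U) :
    ContDiff ℝ ∞ (fun y => G (t, y)) := by
  rw [contDiff_iff_contDiffAt]
  intro y
  exact (hG.contDiffAt (hU.mem_nhds (ht y))).comp y
    ((contDiff_const.prodMk contDiff_id).contDiffAt)

end Slice


def sg (n : ℕ) (i : Fin n) : EuclideanSpace ℝ (Fin n) := EuclideanSpace.single i 1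

section Euc

variable {n : ℕ}

local notation "e" i => sg n i

lemma inner_grad (g : EuclideanSpace ℝ (Fin n) → ℝ) (x v : EuclideanSpace ℝ (Fin n)) :
    ⟪gradient g x, v⟫ = fderiv ℝ g x v := by
  rw [gradient, ← InnerProductSpace.toDual_apply_apply, LinearIsometryEquiv.apply_symm_apply]

lemma inner_grad_grad (g h : EuclideanSpace ℝ (Fin n) → ℝ) (x : EuclideanSpace ℝ (Fin n)) :
    ⟪gradient g x, gradient h x⟫
      = ∑ i : Fin n, fderiv ℝ g x (e i) * fderiv ℝ h x (e i) := by
  rw [← OrthonormalBasis.sum_inner_mul_inner (EuclideanSpace.basisFun (Fin n) ℝ)]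
  refine Finset.sum_congr rfl fun i _ => ?_
  rw [show (EuclideanSpace.basisFun (Fin n) ℝ) i = sg n i from
    by rw [EuclideanSpace.basisFun_apply]; rfl, inner_grad, real_inner_comm, inner_grad]

lemma sum_coord_single (v : EuclideanSpace ℝ (Fin n)) :
    ∑ i : Fin n, v i • EuclideanSpace.single (𝕜 := ℝ) i (1:ℝ) = v := by
  have h := (EuclideanSpace.basisFun (Fin n) ℝ).sum_repr v
  simpa [EuclideanSpace.basisFun_apply, EuclideanSpace.basisFun_repr] using h

lemma fderiv_apply_sum {g : EuclideanSpace ℝ (Fin n) → ℝ} {x : EuclideanSpace ℝ (Fin n)}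
    (v : EuclideanSpace ℝ (Fin n)) :
    fderiv ℝ g x v = ∑ i : Fin n, v i * fderiv ℝ g x (e i) := by
  conv_lhs => rw [← sum_coord_single v]
  rw [map_sum]
  simp [smul_eq_mul, sg]

lemma DD_contDiff {g : EuclideanSpace ℝ (Fin n) → ℝ} (hg : ContDiff ℝ ∞ g)
    (v : EuclideanSpace ℝ (Fin n)) : ContDiff ℝ ∞ (DD g v) :=
  (hg.fderiv_right (m := ∞) (by simp)).clm_apply contDiff_const

lemma hess_expand {g : EuclideanSpace ℝ (Fin n) → ℝ} (hg : ContDiff ℝ ∞ g)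
    (x v w : EuclideanSpace ℝ (Fin n)) :
    hess n g x v w = ∑ i : Fin n, ∑ j : Fin n,
      v i * w j * fderiv ℝ (DD g (e i)) x (e j) := by
  have hdg : ∀ i, ContDiff ℝ ∞ (DD g (e i)) := fun i => DD_contDiff hg _
  unfold hess
  have h1 : (fun y => fderiv ℝ g y v) = fun y => ∑ i : Fin n, v i * DD g (e i) y := by
    funext y; exact fderiv_apply_sum v
  rw [h1]
  have h2 : HasFDerivAt (fun y => ∑ i : Fin n, v i * DD g (e i) y)
      (∑ i : Fin n, v i • fderiv ℝ (DD g (e i)) x) x := by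
    apply HasFDerivAt.fun_sum
    intro i _
    exact (((hdg i).differentiable (by simp) x).hasFDerivAt).const_mul (v i)
  rw [h2.fderiv]
  rw [ContinuousLinearMap.sum_apply]
  refine Finset.sum_congr rfl fun i _ => ?_
  rw [ContinuousLinearMap.smul_apply, smul_eq_mul, fderiv_apply_sum w, Finset.mul_sum]
  refine Finset.sum_congr rfl fun j _ => by ring

lemma witten_expand (φ g : EuclideanSpace ℝ (Fin n) → ℝ) (x : EuclideanSpace ℝ (Fin n)) :
    witten n φ g x = (∑ i : Fin n, fderiv ℝ (DD g (e i)) x (e i))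
      - ∑ i : Fin n, fderiv ℝ φ x (e i) * fderiv ℝ g x (e i) := by
  rw [witten, lap, inner_grad_grad]
  rfl

end Euc


namespace EvoAux

variable {n : ℕ}

abbrev Eu (n : ℕ) := EuclideanSpace ℝ (Fin n)
def Up (n : ℕ) : Set (ℝ × Eu n) := {p | 0 < p.1}
def uh (u : ℝ → Eu n → ℝ) : ℝ × Eu n → ℝ := fun p => u p.1 p.2
def lg (u : ℝ → Eu n → ℝ) : ℝ × Eu n → ℝ := fun p => Real.log (u p.1 p.2)
def td (n : ℕ) : ℝ × Eu n := (1, 0)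
def xdir (n : ℕ) (i : Fin n) : ℝ × Eu n := (0, sg n i)

lemma isOpen_Up : IsOpen (Up n) := isOpen_lt continuous_const continuous_fst

lemma mem_Up {p : ℝ × Eu n} : p ∈ Up n ↔ 0 < p.1 := Iff.rfl

section DDptwise

variable {Z : Type*} [NormedAddCommGroup Z] [NormedSpace ℝ Z] {p v : Z}

lemma DD_sumP {ι : Type*} [Fintype ι] {g : ι → Z → ℝ}
    (h : ∀ i, DifferentiableAt ℝ (g i) p) :
    DD (fun q => ∑ i, g i q) v p = ∑ i, DD (g i) v p := by
  show fderiv ℝ (fun q => ∑ i, g i q) p v = _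
  rw [fderiv_fun_sum (fun i _ => h i)]
  simp [DD]

lemma DD_subP {g h : Z → ℝ} (hg : DifferentiableAt ℝ g p) (hh : DifferentiableAt ℝ h p) :
    DD (fun q => g q - h q) v p = DD g v p - DD h v p := by
  show fderiv ℝ (fun q => g q - h q) p v = _
  rw [fderiv_fun_sub hg hh]; rfl

lemma DD_addP {g h : Z → ℝ} (hg : DifferentiableAt ℝ g p) (hh : DifferentiableAt ℝ h p) :
    DD (fun q => g q + h q) v p = DD g v p + DD h v p := by
  show fderiv ℝ (fun q => g q + h q) p v = _
  rw [fderiv_fun_add hg hh]; rfl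

lemma DD_mulP {g h : Z → ℝ} (hg : DifferentiableAt ℝ g p) (hh : DifferentiableAt ℝ h p) :
    DD (fun q => g q * h q) v p = g p * DD h v p + h p * DD g v p := by
  show fderiv ℝ (fun q => g q * h q) p v = _
  rw [fderiv_fun_mul hg hh]
  simp [DD, smul_eq_mul]

end DDptwise

variable {u : ℝ → Eu n → ℝ} {φ : Eu n → ℝ}

/-- Heat equation in terms of directional derivatives of `uh u`. -/
lemma heatU (hu : ContDiffOn ℝ ∞ (uh u) (Up n))
    (hheat : ∀ t > (0 : ℝ), ∀ x, deriv (fun s => u s x) t = witten n φ (u t) x)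
    {p : ℝ × Eu n} (hp : p ∈ Up n) :
    DD (uh u) (td n) p =
      (∑ j, DD (DD (uh u) (xdir n j)) (xdir n j) p)
        - ∑ j, fderiv ℝ φ p.2 (sg n j) * DD (uh u) (xdir n j) p := by
  obtain ⟨s, y⟩ := p
  have hs : 0 < s := hp
  have hmem : ∀ y' : Eu n, ((s, y') : ℝ × Eu n) ∈ Up n := fun y' => hs
  have h2 := hheat s hs y
  rw [witten_expand] at h2
  have h1 : deriv (fun r => u r y) s = DD (uh u) (td n) (s, y) :=
    deriv_slice_t (dA isOpen_Up hu hp)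
  have h3 : ∀ (j : Fin n) (y' : Eu n),
      fderiv ℝ (u s) y' (sg n j) = DD (uh u) (xdir n j) (s, y') := fun j y' =>
    fderiv_slice_x (dA isOpen_Up hu (hmem y')) (sg n j)
  have h4 : ∀ j : Fin n, DD (u s) (sg n j) = fun y' => DD (uh u) (xdir n j) (s, y') :=
    fun j => funext fun y' => h3 j y'
  have h5 : ∀ j : Fin n, fderiv ℝ (DD (u s) (sg n j)) y (sg n j)
      = DD (DD (uh u) (xdir n j)) (xdir n j) (s, y) := by
    intro j
    rw [h4 j]
    exact fderiv_slice_x (dA isOpen_Up (DD_contDiffOn isOpen_Up hu _) hp) (sg n j)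
  rw [← h1, h2]
  congr 1
  · exact Finset.sum_congr rfl fun j _ => h5 j
  · refine Finset.sum_congr rfl fun j _ => ?_
    rw [← h3 j y]

/-- First derivative of `log u`. -/
lemma lgD (hu : ContDiffOn ℝ ∞ (uh u) (Up n))
    (hpos : ∀ t > (0 : ℝ), ∀ x, 0 < u t x)
    {p : ℝ × Eu n} (hp : p ∈ Up n) (v : ℝ × Eu n) :
    DD (lg u) v p = (uh u p)⁻¹ * DD (uh u) v p := by
  have hne : uh u p ≠ 0 := (hpos p.1 hp p.2).ne'
  have h := ((dA isOpen_Up hu hp).hasFDerivAt.log hne)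
  show fderiv ℝ (lg u) p v = _
  have : fderiv ℝ (lg u) p = (uh u p)⁻¹ • fderiv ℝ (uh u) p := h.fderiv
  rw [this]
  simp [DD, smul_eq_mul]

/-- Second derivative of `log u`. -/
lemma lgDD (hu : ContDiffOn ℝ ∞ (uh u) (Up n))
    (hpos : ∀ t > (0 : ℝ), ∀ x, 0 < u t x)
    {p : ℝ × Eu n} (hp : p ∈ Up n) (v w : ℝ × Eu n) :
    DD (DD (lg u) v) w p = (uh u p)⁻¹ * DD (DD (uh u) v) w p
      - (uh u p)⁻¹ * (uh u p)⁻¹ * (DD (uh u) v p * DD (uh u) w p) := by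
  have hne : uh u p ≠ 0 := (hpos p.1 hp p.2).ne'
  have heq : DD (lg u) v =ᶠ[nhds p] fun q => (uh u q)⁻¹ * DD (uh u) v q :=
    Filter.eventuallyEq_of_mem (isOpen_Up.mem_nhds hp)
      (fun q hq => lgD hu hpos hq v)
  have hinv : HasFDerivAt (fun q => (uh u q)⁻¹)
      ((-(uh u p ^ 2)⁻¹) • fderiv ℝ (uh u) p) p :=
    (hasDerivAt_inv hne).comp_hasFDerivAt p (dA isOpen_Up hu hp).hasFDerivAt
  have hDv : HasFDerivAt (DD (uh u) v) (fderiv ℝ (DD (uh u) v) p) p :=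
    (dA isOpen_Up (DD_contDiffOn isOpen_Up hu v) hp).hasFDerivAt
  have hmul := hinv.fun_mul hDv
  show fderiv ℝ (DD (lg u) v) p w = _
  rw [heq.fderiv_eq, hmul.fderiv]
  have e1 : fderiv ℝ (uh u) p w = DD (uh u) w p := rfl
  have e2 : fderiv ℝ (DD (uh u) v) p w = DD (DD (uh u) v) w p := rfl
  simp only [ContinuousLinearMap.add_apply, ContinuousLinearMap.smul_apply, smul_eq_mul, e1, e2]
  have : (uh u p ^ 2)⁻¹ = (uh u p)⁻¹ * (uh u p)⁻¹ := by
    rw [sq, mul_inv]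
  rw [this]
  ring

/-- Heat equation for `f = log u`. -/
lemma heatF (hu : ContDiffOn ℝ ∞ (uh u) (Up n))
    (hpos : ∀ t > (0 : ℝ), ∀ x, 0 < u t x)
    (hheat : ∀ t > (0 : ℝ), ∀ x, deriv (fun s => u s x) t = witten n φ (u t) x)
    {p : ℝ × Eu n} (hp : p ∈ Up n) :
    DD (lg u) (td n) p =
      ((∑ j, DD (DD (lg u) (xdir n j)) (xdir n j) p)
        - ∑ j, fderiv ℝ φ p.2 (sg n j) * DD (lg u) (xdir n j) p)
      + ∑ j, DD (lg u) (xdir n j) p * DD (lg u) (xdir n j) p := by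
  have hA : ∀ j, DD (lg u) (xdir n j) p = (uh u p)⁻¹ * DD (uh u) (xdir n j) p :=
    fun j => lgD hu hpos hp _
  have hB : ∀ j, DD (DD (lg u) (xdir n j)) (xdir n j) p
      = (uh u p)⁻¹ * DD (DD (uh u) (xdir n j)) (xdir n j) p
        - (uh u p)⁻¹ * (uh u p)⁻¹
          * (DD (uh u) (xdir n j) p * DD (uh u) (xdir n j) p) :=
    fun j => lgDD hu hpos hp _ _
  have S1 : (∑ j, DD (DD (lg u) (xdir n j)) (xdir n j) p)
      = ∑ j, ((uh u p)⁻¹ * DD (DD (uh u) (xdir n j)) (xdir n j) p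
        - (uh u p)⁻¹ * (uh u p)⁻¹
          * (DD (uh u) (xdir n j) p * DD (uh u) (xdir n j) p)) :=
    Finset.sum_congr rfl fun j _ => hB j
  have S2 : (∑ j, fderiv ℝ φ p.2 (sg n j) * DD (lg u) (xdir n j) p)
      = ∑ j, (uh u p)⁻¹ * (fderiv ℝ φ p.2 (sg n j) * DD (uh u) (xdir n j) p) :=
    Finset.sum_congr rfl fun j _ => by rw [hA j]; ring
  have S3 : (∑ j, DD (lg u) (xdir n j) p * DD (lg u) (xdir n j) p)
      = ∑ j, (uh u p)⁻¹ * (uh u p)⁻¹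
          * (DD (uh u) (xdir n j) p * DD (uh u) (xdir n j) p) :=
    Finset.sum_congr rfl fun j _ => by rw [hA j]; ring
  rw [lgD hu hpos hp, heatU hu (φ := φ) hheat hp, S1, S2, S3,
    Finset.sum_sub_distrib, ← Finset.mul_sum, ← Finset.mul_sum, ← Finset.mul_sum]
  ring


lemma lg_contDiffOn (hu : ContDiffOn ℝ ∞ (uh u) (Up n))
    (hpos : ∀ t > (0 : ℝ), ∀ x, 0 < u t x) : ContDiffOn ℝ ∞ (lg u) (Up n) :=
  hu.log fun p hp => (hpos p.1 hp p.2).ne'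

/-- Directional derivative (in any direction `v` of space-time) of the heat equation
for `f = log u`. -/
lemma heatF_DD (hu : ContDiffOn ℝ ∞ (uh u) (Up n))
    (hpos : ∀ t > (0 : ℝ), ∀ x, 0 < u t x)
    (hheat : ∀ t > (0 : ℝ), ∀ x, deriv (fun s => u s x) t = witten n φ (u t) x)
    (hphi : ContDiff ℝ ∞ φ)
    {q : ℝ × Eu n} (hq : q ∈ Up n) (v : ℝ × Eu n) :
    DD (DD (lg u) (td n)) v q
      = (∑ j, DD (DD (DD (lg u) (xdir n j)) (xdir n j)) v q)
        - ((∑ j, fderiv ℝ (DD φ (sg n j)) q.2 v.2 * DD (lg u) (xdir n j) q)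
          + ∑ j, fderiv ℝ φ q.2 (sg n j) * DD (DD (lg u) (xdir n j)) v q)
        + ∑ j, (DD (lg u) (xdir n j) q * DD (DD (lg u) (xdir n j)) v q
            + DD (lg u) (xdir n j) q * DD (DD (lg u) (xdir n j)) v q) := by
  have hlg := lg_contDiffOn hu hpos
  have hL1 : ∀ w, ContDiffOn ℝ ∞ (DD (lg u) w) (Up n) :=
    fun w => DD_contDiffOn isOpen_Up hlg w
  have hL2 : ∀ w w', ContDiffOn ℝ ∞ (DD (DD (lg u) w) w') (Up n) :=
    fun w w' => DD_contDiffOn isOpen_Up (hL1 w) w'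
  have dPhi : ∀ j : Fin n,
      DifferentiableAt ℝ (fun p : ℝ × Eu n => fderiv ℝ φ p.2 (sg n j)) q :=
    fun j => (((DD_contDiff hphi (sg n j)).differentiable (by simp)) q.2).comp q
      differentiableAt_snd
  have d1 : ∀ j : Fin n, DifferentiableAt ℝ (DD (DD (lg u) (xdir n j)) (xdir n j)) q :=
    fun j => dA isOpen_Up (hL2 _ _) hq
  have d2 : ∀ j : Fin n, DifferentiableAt ℝ (DD (lg u) (xdir n j)) q :=
    fun j => dA isOpen_Up (hL1 _) hq
  have dS1 : DifferentiableAt ℝ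
      (fun p => ∑ j, DD (DD (lg u) (xdir n j)) (xdir n j) p) q :=
    DifferentiableAt.fun_sum (fun j _ => d1 j)
  have dS2 : DifferentiableAt ℝ
      (fun p : ℝ × Eu n => ∑ j, fderiv ℝ φ p.2 (sg n j) * DD (lg u) (xdir n j) p) q :=
    DifferentiableAt.fun_sum (fun j _ => (dPhi j).mul (d2 j))
  have dS3 : DifferentiableAt ℝ
      (fun p => ∑ j, DD (lg u) (xdir n j) p * DD (lg u) (xdir n j) p) q :=
    DifferentiableAt.fun_sum (fun j _ => (d2 j).mul (d2 j))
  have heq : (DD (lg u) (td n)) =ᶠ[nhds q] fun p =>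
      ((∑ j, DD (DD (lg u) (xdir n j)) (xdir n j) p)
        - ∑ j, fderiv ℝ φ p.2 (sg n j) * DD (lg u) (xdir n j) p)
      + ∑ j, DD (lg u) (xdir n j) p * DD (lg u) (xdir n j) p :=
    Filter.eventuallyEq_of_mem (isOpen_Up.mem_nhds hq)
      (fun p hp => heatF hu hpos hheat hp)
  have step : DD (DD (lg u) (td n)) v q = DD (fun p =>
      ((∑ j, DD (DD (lg u) (xdir n j)) (xdir n j) p)
        - ∑ j, fderiv ℝ φ p.2 (sg n j) * DD (lg u) (xdir n j) p)
      + ∑ j, DD (lg u) (xdir n j) p * DD (lg u) (xdir n j) p) v q := by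
    show fderiv ℝ (DD (lg u) (td n)) q v = _
    rw [heq.fderiv_eq]; rfl
  have E1 : DD (fun p =>
      ((∑ j, DD (DD (lg u) (xdir n j)) (xdir n j) p)
        - ∑ j, fderiv ℝ φ p.2 (sg n j) * DD (lg u) (xdir n j) p)
      + ∑ j, DD (lg u) (xdir n j) p * DD (lg u) (xdir n j) p) v q
      = DD (fun p : ℝ × Eu n =>
          (∑ j, DD (DD (lg u) (xdir n j)) (xdir n j) p)
            - ∑ j, fderiv ℝ φ p.2 (sg n j) * DD (lg u) (xdir n j) p) v q
        + DD (fun p => ∑ j, DD (lg u) (xdir n j) p * DD (lg u) (xdir n j) p) v q :=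
    DD_addP (dS1.sub dS2) dS3
  have E2 : DD (fun p : ℝ × Eu n =>
      (∑ j, DD (DD (lg u) (xdir n j)) (xdir n j) p)
        - ∑ j, fderiv ℝ φ p.2 (sg n j) * DD (lg u) (xdir n j) p) v q
      = DD (fun p => ∑ j, DD (DD (lg u) (xdir n j)) (xdir n j) p) v q
        - DD (fun p : ℝ × Eu n =>
            ∑ j, fderiv ℝ φ p.2 (sg n j) * DD (lg u) (xdir n j) p) v q :=
    DD_subP dS1 dS2
  have E3 : DD (fun p => ∑ j, DD (DD (lg u) (xdir n j)) (xdir n j) p) v q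
      = ∑ j, DD (DD (DD (lg u) (xdir n j)) (xdir n j)) v q :=
    DD_sumP d1
  have E4 : DD (fun p : ℝ × Eu n =>
        ∑ j, fderiv ℝ φ p.2 (sg n j) * DD (lg u) (xdir n j) p) v q
      = ∑ j, DD (fun p : ℝ × Eu n =>
          fderiv ℝ φ p.2 (sg n j) * DD (lg u) (xdir n j) p) v q :=
    DD_sumP (fun j => (dPhi j).mul (d2 j))
  have E5 : DD (fun p => ∑ j, DD (lg u) (xdir n j) p * DD (lg u) (xdir n j) p) v q
      = ∑ j, DD (fun p => DD (lg u) (xdir n j) p * DD (lg u) (xdir n j) p) v q :=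
    DD_sumP (fun j => (d2 j).mul (d2 j))
  have E6 : ∀ j : Fin n, DD (fun p : ℝ × Eu n =>
        fderiv ℝ φ p.2 (sg n j) * DD (lg u) (xdir n j) p) v q
      = fderiv ℝ (DD φ (sg n j)) q.2 v.2 * DD (lg u) (xdir n j) q
        + fderiv ℝ φ q.2 (sg n j) * DD (DD (lg u) (xdir n j)) v q := by
    intro j
    have h := DD_mulP (v := v) (dPhi j) (d2 j)
    rw [h]
    have h2 : DD (fun p : ℝ × Eu n => fderiv ℝ φ p.2 (sg n j)) v q
        = fderiv ℝ (DD φ (sg n j)) q.2 v.2 := by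
      obtain ⟨tq, xq⟩ := q
      exact fderiv_indep ((DD_contDiff hphi (sg n j)).differentiable (by simp) xq) v
    rw [h2]
    ring
  have E7 : ∀ j : Fin n,
      DD (fun p => DD (lg u) (xdir n j) p * DD (lg u) (xdir n j) p) v q
      = DD (lg u) (xdir n j) q * DD (DD (lg u) (xdir n j)) v q
        + DD (lg u) (xdir n j) q * DD (DD (lg u) (xdir n j)) v q :=
    fun j => DD_mulP (d2 j) (d2 j)
  rw [step, E1, E2, E3, E4, E5, Finset.sum_congr rfl (fun j _ => E6 j),
    Finset.sum_congr rfl (fun j _ => E7 j), Finset.sum_add_distrib]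



lemma slice_d1 {G : ℝ × Eu n → ℝ} (hG : ContDiffOn ℝ ∞ G (Up n)) {t : ℝ} (ht : 0 < t)
    (i : Fin n) (y : Eu n) :
    fderiv ℝ (fun y' => G (t, y')) y (sg n i) = DD G (xdir n i) (t, y) :=
  fderiv_slice_x (dA isOpen_Up hG (show ((t, y) : ℝ × Eu n) ∈ Up n from ht)) (sg n i)

lemma slice_dfun {G : ℝ × Eu n → ℝ} (hG : ContDiffOn ℝ ∞ G (Up n)) {t : ℝ} (ht : 0 < t)
    (i : Fin n) :
    DD (fun y' => G (t, y')) (sg n i) = fun y => DD G (xdir n i) (t, y) :=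
  funext fun y => slice_d1 hG ht i y

lemma slice_d2 {G : ℝ × Eu n → ℝ} (hG : ContDiffOn ℝ ∞ G (Up n)) {t : ℝ} (ht : 0 < t)
    (i j : Fin n) (y : Eu n) :
    fderiv ℝ (DD (fun y' => G (t, y')) (sg n i)) y (sg n j)
      = DD (DD G (xdir n i)) (xdir n j) (t, y) := by
  rw [slice_dfun hG ht i]
  exact fderiv_slice_x (dA isOpen_Up (DD_contDiffOn isOpen_Up hG _)
    (show ((t, y) : ℝ × Eu n) ∈ Up n from ht)) (sg n j)

lemma sym3 (hu : ContDiffOn ℝ ∞ (uh u) (Up n))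
    (hpos : ∀ t > (0 : ℝ), ∀ x, 0 < u t x)
    {q : ℝ × Eu n} (hq : q ∈ Up n) (j : Fin n) :
    DD (DD (DD (lg u) (xdir n j)) (xdir n j)) (td n) q
      = DD (DD (DD (lg u) (td n)) (xdir n j)) (xdir n j) q := by
  have hlg := lg_contDiffOn hu hpos
  have h1 := DD_comm isOpen_Up (DD_contDiffOn isOpen_Up hlg (xdir n j)) hq (xdir n j) (td n)
  have heq : DD (DD (lg u) (xdir n j)) (td n) =ᶠ[nhds q] DD (DD (lg u) (td n)) (xdir n j) :=
    Filter.eventuallyEq_of_mem (isOpen_Up.mem_nhds hq)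
      (fun p hp => DD_comm isOpen_Up hlg hp (xdir n j) (td n))
  have h2 : DD (DD (DD (lg u) (xdir n j)) (td n)) (xdir n j) q
      = DD (DD (DD (lg u) (td n)) (xdir n j)) (xdir n j) q := by
    show fderiv ℝ (DD (DD (lg u) (xdir n j)) (td n)) q (xdir n j)
      = fderiv ℝ (DD (DD (lg u) (td n)) (xdir n j)) q (xdir n j)
    rw [heq.fderiv_eq]
  rw [h1, h2]

lemma grad_coord (g : Eu n → ℝ) (x : Eu n) (i : Fin n) :
    gradient g x i = fderiv ℝ g x (sg n i) := by
  rw [← inner_grad g x (sg n i)]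
  rw [sg, EuclideanSpace.inner_single_right]; simp

end EvoAux


open EvoAux in
/-- Evolution identity for `f_t = ∂ₜ log u` along the heat equation of the Witten
Laplacian on `ℝⁿ`: `(L − ∂ₜ)(∂ₜf) = −4∇²f(∇f, ∇f) − 2⟨∇(Lf), ∇f⟩` where `f = log u`. -/
theorem evolution_identity_dt_log_u
    (n : ℕ) (hn : 1 ≤ n)
    (φ : EuclideanSpace ℝ (Fin n) → ℝ) (hφ : ContDiff ℝ (⊤ : ℕ∞) φ)
    (u : ℝ → EuclideanSpace ℝ (Fin n) → ℝ)
    (hu : ContDiffOn ℝ (⊤ : ℕ∞) (fun p : ℝ × EuclideanSpace ℝ (Fin n) => u p.1 p.2)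
      {p : ℝ × EuclideanSpace ℝ (Fin n) | 0 < p.1})
    (hpos : ∀ t > (0 : ℝ), ∀ x, 0 < u t x)
    (hheat : ∀ t > (0 : ℝ), ∀ x, deriv (fun s => u s x) t = witten n φ (u t) x)
    (f : ℝ → EuclideanSpace ℝ (Fin n) → ℝ)
    (hf : f = fun t x => Real.log (u t x)) :
    ∀ t > (0 : ℝ), ∀ x,
      witten n φ (fun y => deriv (fun s => f s y) t) x
          - deriv (fun s => deriv (fun r => f r x) s) t
        = -4 * hess n (f t) x (gradient (f t) x) (gradient (f t) x)
          - 2 * ⟪gradient (fun y => witten n φ (f t) y) x, gradient (f t) x⟫ := by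
  subst hf
  intro t ht x
  have hu' : ContDiffOn ℝ ∞ (uh u) (Up n) := hu.of_le (by simp)
  have hphi : ContDiff ℝ ∞ φ := hφ.of_le (by simp)
  have hlg : ContDiffOn ℝ ∞ (lg u) (Up n) := lg_contDiffOn hu' hpos
  have hmem : ∀ y : Eu n, ((t, y) : ℝ × Eu n) ∈ Up n := fun _ => ht
  -- spatial slice conversions
  have sd1 : ∀ (j : Fin n) (y : Eu n), fderiv ℝ (fun y' => Real.log (u t y')) y (sg n j)
      = DD (lg u) (xdir n j) (t, y) := fun j y => slice_d1 hlg ht j y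
  have sd2 : ∀ (i j : Fin n) (y : Eu n),
      fderiv ℝ (DD (fun y' => Real.log (u t y')) (sg n i)) y (sg n j)
      = DD (DD (lg u) (xdir n i)) (xdir n j) (t, y) := fun i j y => slice_d2 hlg ht i j y
  have sd1T : ∀ (j : Fin n) (y : Eu n),
      fderiv ℝ (fun y' => DD (lg u) (td n) (t, y')) y (sg n j)
      = DD (DD (lg u) (td n)) (xdir n j) (t, y) :=
    fun j y => slice_d1 (DD_contDiffOn isOpen_Up hlg (td n)) ht j y
  have sd2T : ∀ (i j : Fin n) (y : Eu n),
      fderiv ℝ (DD (fun y' => DD (lg u) (td n) (t, y')) (sg n i)) y (sg n j)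
      = DD (DD (DD (lg u) (td n)) (xdir n i)) (xdir n j) (t, y) :=
    fun i j y => slice_d2 (DD_contDiffOn isOpen_Up hlg (td n)) ht i j y
  -- (1) the function ∂ₜ f
  have hg1 : (fun y => deriv (fun s => Real.log (u s y)) t)
      = fun y => DD (lg u) (td n) (t, y) :=
    funext fun y => deriv_slice_t (dA isOpen_Up hlg (hmem y))
  -- (2) witten applied to ∂ₜ f
  have hWit : witten n φ (fun y => DD (lg u) (td n) (t, y)) x
      = (∑ i, DD (DD (DD (lg u) (td n)) (xdir n i)) (xdir n i) (t, x)) - ∑ i, fderiv ℝ φ x (sg n i) * DD (DD (lg u) (td n)) (xdir n i) (t, x) := by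
    rw [witten_expand]
    congr 1
    · exact Finset.sum_congr rfl fun i _ => sd2T i i x
    · refine Finset.sum_congr rfl fun i _ => ?_
      rw [sd1T i x]
  -- (3) second time derivative
  have hTime : deriv (fun s => deriv (fun r => Real.log (u r x)) s) t = DD (DD (lg u) (td n)) (td n) (t, x) := by
    have heq : (fun s => deriv (fun r => Real.log (u r x)) s)
        =ᶠ[nhds t] fun s => DD (lg u) (td n) (s, x) :=
      Filter.eventuallyEq_of_mem (Ioi_mem_nhds ht)
        (fun s hs => deriv_slice_t (dA isOpen_Up hlg (show ((s, x) : ℝ × Eu n) ∈ Up n from hs)))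
    rw [heq.deriv_eq]
    exact deriv_slice_t (dA isOpen_Up (DD_contDiffOn isOpen_Up hlg (td n)) ht)
  -- (4) hessian term
  have hft : ContDiff ℝ ∞ (fun y => Real.log (u t y)) :=
    contDiff_slice isOpen_Up hlg (fun y => ht)
  have hgradc : ∀ i : Fin n, gradient (fun y => Real.log (u t y)) x i
      = DD (lg u) (xdir n i) (t, x) := by
    intro i
    rw [grad_coord]
    exact sd1 i x
  have hHess : hess n (fun y => Real.log (u t y)) x (gradient (fun y => Real.log (u t y)) x)
        (gradient (fun y => Real.log (u t y)) x)
      = ∑ i, ∑ j, DD (lg u) (xdir n i) (t, x) * DD (lg u) (xdir n j) (t, x) * DD (DD (lg u) (xdir n i)) (xdir n j) (t, x) := by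
    rw [hess_expand hft]
    refine Finset.sum_congr rfl fun i _ => Finset.sum_congr rfl fun j _ => ?_
    rw [hgradc i, hgradc j, sd2 i j x]
  -- (5) gradient of witten term
  have dphi : ∀ j : Fin n, DifferentiableAt ℝ (DD φ (sg n j)) x :=
    fun j => (DD_contDiff hphi (sg n j)).differentiable (by simp) x
  have dGjj : ∀ j : Fin n,
      DifferentiableAt ℝ (fun y => DD (DD (lg u) (xdir n j)) (xdir n j) (t, y)) x :=
    fun j => (contDiff_slice isOpen_Up
      (DD_contDiffOn isOpen_Up (DD_contDiffOn isOpen_Up hlg _) _) (fun y => ht)).differentiable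
      (by simp) x
  have dGj : ∀ j : Fin n, DifferentiableAt ℝ (fun y => DD (lg u) (xdir n j) (t, y)) x :=
    fun j => (contDiff_slice isOpen_Up (DD_contDiffOn isOpen_Up hlg _)
      (fun y => ht)).differentiable (by simp) x
  have hwit2 : (fun y => witten n φ (fun y' => Real.log (u t y')) y)
      = fun y => ((∑ j, DD (DD (lg u) (xdir n j)) (xdir n j) (t, y))
          - ∑ j, DD φ (sg n j) y * DD (lg u) (xdir n j) (t, y)) := by
    funext y
    rw [witten_expand]
    congr 1
    · exact Finset.sum_congr rfl fun j _ => sd2 j j y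
    · refine Finset.sum_congr rfl fun j _ => ?_
      rw [sd1 j y]
      rfl
  have hWgrad : ∀ i : Fin n,
      fderiv ℝ (fun y => witten n φ (fun y' => Real.log (u t y')) y) x (sg n i)
      = ((∑ j, DD (DD (DD (lg u) (xdir n j)) (xdir n j)) (xdir n i) (t, x)) - ∑ j, (fderiv ℝ φ x (sg n j) * DD (DD (lg u) (xdir n j)) (xdir n i) (t, x) + DD (lg u) (xdir n j) (t, x) * fderiv ℝ (DD φ (sg n j)) x (sg n i))) := by
    intro i
    rw [hwit2]
    show DD (fun y => ((∑ j, DD (DD (lg u) (xdir n j)) (xdir n j) (t, y))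
        - ∑ j, DD φ (sg n j) y * DD (lg u) (xdir n j) (t, y))) (sg n i) x = _
    have F1 : DD (fun y => ((∑ j, DD (DD (lg u) (xdir n j)) (xdir n j) (t, y))
          - ∑ j, DD φ (sg n j) y * DD (lg u) (xdir n j) (t, y))) (sg n i) x
        = DD (fun y => ∑ j, DD (DD (lg u) (xdir n j)) (xdir n j) (t, y)) (sg n i) x
          - DD (fun y => ∑ j, DD φ (sg n j) y * DD (lg u) (xdir n j) (t, y)) (sg n i) x :=
      DD_subP (DifferentiableAt.fun_sum fun j _ => dGjj j)
        (DifferentiableAt.fun_sum fun j _ => (dphi j).mul (dGj j))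
    have F2 : DD (fun y => ∑ j, DD (DD (lg u) (xdir n j)) (xdir n j) (t, y)) (sg n i) x
        = ∑ j, DD (fun y => DD (DD (lg u) (xdir n j)) (xdir n j) (t, y)) (sg n i) x :=
      DD_sumP dGjj
    have F3 : DD (fun y => ∑ j, DD φ (sg n j) y * DD (lg u) (xdir n j) (t, y)) (sg n i) x
        = ∑ j, DD (fun y => DD φ (sg n j) y * DD (lg u) (xdir n j) (t, y)) (sg n i) x :=
      DD_sumP (fun j => (dphi j).mul (dGj j))
    have F4 : ∀ j : Fin n, DD (fun y => DD (DD (lg u) (xdir n j)) (xdir n j) (t, y)) (sg n i) x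
        = DD (DD (DD (lg u) (xdir n j)) (xdir n j)) (xdir n i) (t, x) :=
      fun j => slice_d1 (DD_contDiffOn isOpen_Up (DD_contDiffOn isOpen_Up hlg _) _) ht i x
    have F5 : ∀ j : Fin n, DD (fun y => DD φ (sg n j) y * DD (lg u) (xdir n j) (t, y)) (sg n i) x
        = fderiv ℝ φ x (sg n j) * DD (DD (lg u) (xdir n j)) (xdir n i) (t, x) + DD (lg u) (xdir n j) (t, x) * fderiv ℝ (DD φ (sg n j)) x (sg n i) := by
      intro j
      have h := DD_mulP (v := sg n i) (p := x) (dphi j) (dGj j)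
      rw [h]
      have h2 : DD (fun y => DD (lg u) (xdir n j) (t, y)) (sg n i) x = DD (DD (lg u) (xdir n j)) (xdir n i) (t, x) :=
        slice_d1 (DD_contDiffOn isOpen_Up hlg _) ht i x
      rw [h2]
      rfl
    rw [F1, F2, F3, Finset.sum_congr rfl (fun j _ => F4 j),
      Finset.sum_congr rfl (fun j _ => F5 j)]
  have hInner : ⟪gradient (fun y => witten n φ (fun y' => Real.log (u t y')) y) x,
        gradient (fun y => Real.log (u t y)) x⟫
      = ∑ i, ((∑ j, DD (DD (DD (lg u) (xdir n j)) (xdir n j)) (xdir n i) (t, x)) - ∑ j, (fderiv ℝ φ x (sg n j) * DD (DD (lg u) (xdir n j)) (xdir n i) (t, x) + DD (lg u) (xdir n j) (t, x) * fderiv ℝ (DD φ (sg n j)) x (sg n i))) * DD (lg u) (xdir n i) (t, x) := by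
    rw [inner_grad_grad]
    refine Finset.sum_congr rfl fun i _ => ?_
    rw [hWgrad i, sd1 i x]
  -- (6) the two heat-equation derivative identities
  have hTi : ∀ i : Fin n, DD (DD (lg u) (td n)) (xdir n i) (t, x)
      = (∑ j, DD (DD (DD (lg u) (xdir n j)) (xdir n j)) (xdir n i) (t, x))
        - ((∑ j, fderiv ℝ (DD φ (sg n j)) x (sg n i) * DD (lg u) (xdir n j) (t, x)) + ∑ j, fderiv ℝ φ x (sg n j) * DD (DD (lg u) (xdir n j)) (xdir n i) (t, x))
        + ∑ j, (DD (lg u) (xdir n j) (t, x) * DD (DD (lg u) (xdir n j)) (xdir n i) (t, x) + DD (lg u) (xdir n j) (t, x) * DD (DD (lg u) (xdir n j)) (xdir n i) (t, x)) :=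
    fun i => heatF_DD hu' hpos hheat hphi ht (xdir n i)
  have hTT0 : DD (DD (lg u) (td n)) (td n) (t, x)
      = (∑ j, DD (DD (DD (lg u) (xdir n j)) (xdir n j)) (td n) (t, x))
        - ((∑ j, fderiv ℝ (DD φ (sg n j)) x (0 : Eu n) * DD (lg u) (xdir n j) (t, x))
          + ∑ j, fderiv ℝ φ x (sg n j) * DD (DD (lg u) (xdir n j)) (td n) (t, x))
        + ∑ j, (DD (lg u) (xdir n j) (t, x) * DD (DD (lg u) (xdir n j)) (td n) (t, x)
            + DD (lg u) (xdir n j) (t, x) * DD (DD (lg u) (xdir n j)) (td n) (t, x)) :=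
    heatF_DD hu' hpos hheat hphi ht (td n)
  have hsym1 : ∀ j : Fin n, DD (DD (lg u) (xdir n j)) (td n) (t, x) = DD (DD (lg u) (td n)) (xdir n j) (t, x) :=
    fun j => DD_comm isOpen_Up hlg ht (xdir n j) (td n)
  have hsym2 : ∀ j : Fin n, DD (DD (DD (lg u) (xdir n j)) (xdir n j)) (td n) (t, x)
      = DD (DD (DD (lg u) (td n)) (xdir n j)) (xdir n j) (t, x) := fun j => sym3 hu' hpos ht j
  have hzero : (∑ j, fderiv ℝ (DD φ (sg n j)) x (0 : Eu n) * DD (lg u) (xdir n j) (t, x)) = 0 := by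
    refine Finset.sum_eq_zero fun j _ => ?_
    rw [map_zero, zero_mul]
  have hTT : DD (DD (lg u) (td n)) (td n) (t, x)
      = (∑ j, DD (DD (DD (lg u) (td n)) (xdir n j)) (xdir n j) (t, x)) - ((0 : ℝ) + ∑ j, fderiv ℝ φ x (sg n j) * DD (DD (lg u) (td n)) (xdir n j) (t, x))
        + ∑ j, (DD (lg u) (xdir n j) (t, x) * DD (DD (lg u) (td n)) (xdir n j) (t, x) + DD (lg u) (xdir n j) (t, x) * DD (DD (lg u) (td n)) (xdir n j) (t, x)) := by
    have s1 : (∑ j, DD (DD (DD (lg u) (xdir n j)) (xdir n j)) (td n) (t, x))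
        = ∑ j, DD (DD (DD (lg u) (td n)) (xdir n j)) (xdir n j) (t, x) :=
      Finset.sum_congr rfl fun j _ => hsym2 j
    have s2 : (∑ j, fderiv ℝ φ x (sg n j) * DD (DD (lg u) (xdir n j)) (td n) (t, x))
        = ∑ j, fderiv ℝ φ x (sg n j) * DD (DD (lg u) (td n)) (xdir n j) (t, x) :=
      Finset.sum_congr rfl fun j _ => by rw [hsym1 j]
    have s3 : (∑ j, (DD (lg u) (xdir n j) (t, x) * DD (DD (lg u) (xdir n j)) (td n) (t, x)
          + DD (lg u) (xdir n j) (t, x) * DD (DD (lg u) (xdir n j)) (td n) (t, x)))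
        = ∑ j, (DD (lg u) (xdir n j) (t, x) * DD (DD (lg u) (td n)) (xdir n j) (t, x) + DD (lg u) (xdir n j) (t, x) * DD (DD (lg u) (td n)) (xdir n j) (t, x)) :=
      Finset.sum_congr rfl fun j _ => by rw [hsym1 j]
    rw [hTT0, hzero, s1, s2, s3]
  -- assemble
  show witten n φ (fun y => deriv (fun s => Real.log (u s y)) t) x
      - deriv (fun s => deriv (fun r => Real.log (u r x)) s) t
    = -4 * hess n (fun y => Real.log (u t y)) x (gradient (fun y => Real.log (u t y)) x)
        (gradient (fun y => Real.log (u t y)) x)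
      - 2 * ⟪gradient (fun y => witten n φ (fun y' => Real.log (u t y')) y) x,
          gradient (fun y => Real.log (u t y)) x⟫
  rw [hg1, hWit, hTime, hHess, hInner, hTT]
  -- final algebra
  have step1 : (∑ j, (DD (lg u) (xdir n j) (t, x) * DD (DD (lg u) (td n)) (xdir n j) (t, x) + DD (lg u) (xdir n j) (t, x) * DD (DD (lg u) (td n)) (xdir n j) (t, x)))
      = 2 * ∑ j, DD (lg u) (xdir n j) (t, x) * DD (DD (lg u) (td n)) (xdir n j) (t, x) := by
    rw [Finset.mul_sum]
    exact Finset.sum_congr rfl fun j _ => by ring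
  have step2 : (∑ i, DD (lg u) (xdir n i) (t, x) * DD (DD (lg u) (td n)) (xdir n i) (t, x))
      = (∑ i, ((∑ j, DD (DD (DD (lg u) (xdir n j)) (xdir n j)) (xdir n i) (t, x)) - ∑ j, (fderiv ℝ φ x (sg n j) * DD (DD (lg u) (xdir n j)) (xdir n i) (t, x) + DD (lg u) (xdir n j) (t, x) * fderiv ℝ (DD φ (sg n j)) x (sg n i))) * DD (lg u) (xdir n i) (t, x))
        + 2 * ∑ i, DD (lg u) (xdir n i) (t, x) * ∑ j, DD (lg u) (xdir n j) (t, x) * DD (DD (lg u) (xdir n j)) (xdir n i) (t, x) := by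
    rw [Finset.mul_sum, ← Finset.sum_add_distrib]
    refine Finset.sum_congr rfl fun i _ => ?_
    rw [hTi i]
    have e1 : (∑ j, (fderiv ℝ φ x (sg n j) * DD (DD (lg u) (xdir n j)) (xdir n i) (t, x) + DD (lg u) (xdir n j) (t, x) * fderiv ℝ (DD φ (sg n j)) x (sg n i)))
        = (∑ j, fderiv ℝ φ x (sg n j) * DD (DD (lg u) (xdir n j)) (xdir n i) (t, x)) + ∑ j, DD (lg u) (xdir n j) (t, x) * fderiv ℝ (DD φ (sg n j)) x (sg n i) :=
      Finset.sum_add_distrib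
    have e2 : (∑ j, (DD (lg u) (xdir n j) (t, x) * DD (DD (lg u) (xdir n j)) (xdir n i) (t, x) + DD (lg u) (xdir n j) (t, x) * DD (DD (lg u) (xdir n j)) (xdir n i) (t, x)))
        = (∑ j, DD (lg u) (xdir n j) (t, x) * DD (DD (lg u) (xdir n j)) (xdir n i) (t, x)) + ∑ j, DD (lg u) (xdir n j) (t, x) * DD (DD (lg u) (xdir n j)) (xdir n i) (t, x) :=
      Finset.sum_add_distrib
    have e3 : (∑ j, fderiv ℝ (DD φ (sg n j)) x (sg n i) * DD (lg u) (xdir n j) (t, x)) = ∑ j, DD (lg u) (xdir n j) (t, x) * fderiv ℝ (DD φ (sg n j)) x (sg n i) :=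
      Finset.sum_congr rfl fun j _ => by ring
    rw [e2, e3]
    ring_nf
    rw [e1]
    ring
  have step3 : (∑ i, DD (lg u) (xdir n i) (t, x) * ∑ j, DD (lg u) (xdir n j) (t, x) * DD (DD (lg u) (xdir n j)) (xdir n i) (t, x))
      = ∑ i, ∑ j, DD (lg u) (xdir n i) (t, x) * DD (lg u) (xdir n j) (t, x) * DD (DD (lg u) (xdir n i)) (xdir n j) (t, x) := by
    rw [Finset.sum_congr rfl (fun i _ => Finset.mul_sum _ _ _), Finset.sum_comm]
    exact Finset.sum_congr rfl fun i _ => Finset.sum_congr rfl fun j _ => by ring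
  rw [step1, step2, step3]
  ring
end
end

section
/- Let K ≥ 0, let φ : ℝ^n → ℝ be smooth, let u : (0,∞) × ℝ^n → ℝ be a smooth positive solution of ∂ₜu = Lu, set f = log u and F(t,x) = t e^{−4Kt}|∇f(t,x)|² − t e^{−2Kt} ∂ₜf(t,x). Then for all t > 0 the pointwise identity (L − ∂ₜ)F = 2t e^{−4Kt}|∇²f|² − 2⟨∇F, ∇f⟩ + 2t e^{−4Kt}(∇²φ(∇f, ∇f) + K|∇f|²) + ((2Kt − 1)/t) F holds on (0,∞) × ℝ^n. (Euclidean case, where Ric(L) = ∇²φ, of the key evolution identity for F in the proof of the paper's Theorem 2.1 in the noncompact case.) -/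
open scoped RealInnerProductSpace

noncomputable section

-- ## Auxiliary machinery

variable {X : Type*} [NormedAddCommGroup X] [NormedSpace ℝ X]

lemma fderiv_apply_clm {g : X → ℝ} {x : X} (h : DifferentiableAt ℝ (fderiv ℝ g) x) (v w : X) :
    fderiv ℝ (fun y => fderiv ℝ g y v) x w = fderiv ℝ (fderiv ℝ g) x w v := by
  have := fderiv_clm_apply (𝕜 := ℝ) h (differentiableAt_const v)
  simp only [fderiv_fun_const] at this
  rw [show (fun y => fderiv ℝ g y v) = (fun y => (fderiv ℝ g y) v) from rfl, this]
  simp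

lemma schwarz {g : X → ℝ} {x : X} (h : ContDiffAt ℝ (⊤ : ℕ∞) g x) (v w : X) :
    fderiv ℝ (fun y => fderiv ℝ g y v) x w = fderiv ℝ (fun y => fderiv ℝ g y w) x v := by
  have hd : DifferentiableAt ℝ (fderiv ℝ g) x :=
    (h.fderiv_right (m := 1) (WithTop.coe_le_coe.mpr le_top)).differentiableAt one_ne_zero
  rw [fderiv_apply_clm hd, fderiv_apply_clm hd]
  exact (h.isSymmSndFDerivAt (by rw [minSmoothness_of_isRCLikeNormedField]; exact WithTop.coe_le_coe.mpr le_top)).eq w v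

lemma contDiffAt_D {g : X → ℝ} {x : X} (h : ContDiffAt ℝ (⊤ : ℕ∞) g x) (v : X) :
    ContDiffAt ℝ (⊤ : ℕ∞) (fun y => fderiv ℝ g y v) x :=
  (h.fderiv_right (m := (⊤ : ℕ∞)) (by simp)).clm_apply contDiffAt_const

-- slice lemmas
lemma fderiv_slice_space {h : ℝ × X → ℝ} {t : ℝ} {x : X}
    (hd : DifferentiableAt ℝ h (t, x)) (v : X) :
    fderiv ℝ (fun y => h (t, y)) x v = fderiv ℝ h (t, x) ((0 : ℝ), v) := by
  have h1 : HasFDerivAt (fun y : X => ((t : ℝ), y))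
      ((0 : X →L[ℝ] ℝ).prod (ContinuousLinearMap.id ℝ X)) x :=
    (hasFDerivAt_const t x).prodMk (hasFDerivAt_id x)
  have h2 := hd.hasFDerivAt.comp x h1
  have : fderiv ℝ (fun y => h (t, y)) x
      = (fderiv ℝ h (t, x)).comp ((0 : X →L[ℝ] ℝ).prod (ContinuousLinearMap.id ℝ X)) :=
    h2.fderiv
  rw [this]
  rfl

lemma deriv_slice_time {h : ℝ × X → ℝ} {t : ℝ} {x : X}
    (hd : DifferentiableAt ℝ h (t, x)) :
    deriv (fun s => h (s, x)) t = fderiv ℝ h (t, x) ((1 : ℝ), (0 : X)) := by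
  have h1 : HasDerivAt (fun s : ℝ => (s, x)) ((1 : ℝ), (0 : X)) t :=
    (hasDerivAt_id t).prodMk (hasDerivAt_const t x)
  exact (hd.hasFDerivAt.comp_hasDerivAt t h1).deriv

variable {X : Type*} [NormedAddCommGroup X] [NormedSpace ℝ X]

def DJ (h : X → ℝ) (p v : X) : ℝ := fderiv ℝ h p v

lemma DJ_add {A B : X → ℝ} {p : X} (hA : DifferentiableAt ℝ A p)
    (hB : DifferentiableAt ℝ B p) (v : X) :
    DJ (fun q => A q + B q) p v = DJ A p v + DJ B p v := by
  simp only [DJ, fderiv_fun_add hA hB]; rfl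

lemma DJ_sub {A B : X → ℝ} {p : X} (hA : DifferentiableAt ℝ A p)
    (hB : DifferentiableAt ℝ B p) (v : X) :
    DJ (fun q => A q - B q) p v = DJ A p v - DJ B p v := by
  simp only [DJ, fderiv_fun_sub hA hB]; rfl

lemma DJ_mul {A B : X → ℝ} {p : X} (hA : DifferentiableAt ℝ A p)
    (hB : DifferentiableAt ℝ B p) (v : X) :
    DJ (fun q => A q * B q) p v = A p * DJ B p v + B p * DJ A p v := by
  simp only [DJ, fderiv_fun_mul hA hB]; rfl

lemma DJ_sum {ι : Type*} {s : Finset ι} {A : ι → X → ℝ} {p : X}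
    (hA : ∀ i ∈ s, DifferentiableAt ℝ (A i) p) (v : X) :
    DJ (fun q => ∑ i ∈ s, A i q) p v = ∑ i ∈ s, DJ (A i) p v := by
  simp only [DJ]
  have h1 : fderiv ℝ (fun q => ∑ i ∈ s, A i q) p = ∑ i ∈ s, fderiv ℝ (A i) p := by
    have := fderiv_fun_sum hA
    rw [show (fun y => ∑ i ∈ s, A i y) = (fun q => ∑ i ∈ s, A i q) from rfl] at this
    exact this
  rw [h1]
  simp

lemma DJ_sq {A : X → ℝ} {p : X} (hA : DifferentiableAt ℝ A p) (v : X) :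
    DJ (fun q => (A q) ^ 2) p v = 2 * A p * DJ A p v := by
  have : (fun q => (A q) ^ 2) = fun q => A q * A q := by funext q; ring
  rw [this, DJ_mul hA hA]; ring

lemma DJ_fst {Y : Type*} [NormedAddCommGroup Y] [NormedSpace ℝ Y]
    {A : ℝ → ℝ} {p : ℝ × Y} (hA : DifferentiableAt ℝ A p.1) (v : ℝ × Y) :
    DJ (fun q : ℝ × Y => A q.1) p v = deriv A p.1 * v.1 := by
  have h1 : HasFDerivAt (fun q : ℝ × Y => A q.1)
      (((1 : ℝ →L[ℝ] ℝ).smulRight (deriv A p.1)).comp (ContinuousLinearMap.fst ℝ ℝ Y)) p :=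
    (hA.hasDerivAt.hasFDerivAt).comp p (hasFDerivAt_fst)
  rw [DJ, h1.fderiv]
  simp [mul_comm]

variable {n : ℕ}

local notation "Ee" => EuclideanSpace ℝ (Fin n)

def ee (n : ℕ) (i : Fin n) : EuclideanSpace ℝ (Fin n) := EuclideanSpace.single i 1

lemma euclid_expand (v : Ee) : v = ∑ i, v i • ee n i := by
  ext j
  have : (∑ i, v i • ee n i) j = ∑ i, (v i • ee n i) j := by
    rw [WithLp.ofLp_sum]; exact Finset.sum_apply j Finset.univ _
  rw [this]
  simp only [PiLp.smul_apply, smul_eq_mul, ee,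
    EuclideanSpace.single_apply, mul_ite, mul_one, mul_zero,
    Finset.sum_ite_eq, Finset.mem_univ, if_true]

lemma grad_inner (g : Ee → ℝ) (x v : Ee) : ⟪gradient g x, v⟫ = fderiv ℝ g x v :=
  InnerProductSpace.toDual_symm_apply

lemma grad_coord (g : Ee → ℝ) (x : Ee) (i : Fin n) :
    gradient g x i = fderiv ℝ g x (ee n i) := by
  have : ⟪gradient g x, ee n i⟫ = fderiv ℝ g x (ee n i) := grad_inner g x _
  rw [← this, real_inner_comm]
  rw [ee, EuclideanSpace.inner_single_left]; simp

lemma inner_grads (g h : Ee → ℝ) (x : Ee) :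
    ⟪gradient g x, gradient h x⟫ = ∑ i, fderiv ℝ g x (ee n i) * fderiv ℝ h x (ee n i) := by
  rw [PiLp.inner_apply]
  simp [grad_coord]
  exact Finset.sum_congr rfl fun i _ => mul_comm _ _

lemma norm_grad_sq (g : Ee → ℝ) (x : Ee) :
    ‖gradient g x‖ ^ 2 = ∑ i, (fderiv ℝ g x (ee n i)) ^ 2 := by
  rw [← real_inner_self_eq_norm_sq, inner_grads]
  simp [sq]

-- DJ2 / DJ3 and symmetry
section DJn
variable {X : Type*} [NormedAddCommGroup X] [NormedSpace ℝ X]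

def DJ2 (h : X → ℝ) (p v w : X) : ℝ := DJ (fun q => DJ h q v) p w

def DJ3 (h : X → ℝ) (p v w z : X) : ℝ := DJ (fun q => DJ2 h q v w) p z

lemma contDiffAt_DJ {h : X → ℝ} {x : X} (hh : ContDiffAt ℝ (⊤ : ℕ∞) h x) (v : X) :
    ContDiffAt ℝ (⊤ : ℕ∞) (fun q => DJ h q v) x := contDiffAt_D hh v

lemma contDiffAt_DJ2 {h : X → ℝ} {x : X} (hh : ContDiffAt ℝ (⊤ : ℕ∞) h x) (v w : X) :
    ContDiffAt ℝ (⊤ : ℕ∞) (fun q => DJ2 h q v w) x := contDiffAt_D (contDiffAt_D hh v) w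

lemma diffAt_DJ {h : X → ℝ} {x : X} (hh : ContDiffAt ℝ (⊤ : ℕ∞) h x) (v : X) :
    DifferentiableAt ℝ (fun q => DJ h q v) x :=
  (contDiffAt_DJ hh v).differentiableAt (by simp)

lemma diffAt_DJ2 {h : X → ℝ} {x : X} (hh : ContDiffAt ℝ (⊤ : ℕ∞) h x) (v w : X) :
    DifferentiableAt ℝ (fun q => DJ2 h q v w) x :=
  (contDiffAt_DJ2 hh v w).differentiableAt (by simp)

lemma DJ2_symm {h : X → ℝ} {x : X} (hh : ContDiffAt ℝ (⊤ : ℕ∞) h x) (v w : X) :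
    DJ2 h x v w = DJ2 h x w v := schwarz hh v w

lemma DJ3_symm23 {h : X → ℝ} {x : X} (hh : ContDiffAt ℝ (⊤ : ℕ∞) h x) (v w z : X) :
    DJ3 h x v w z = DJ3 h x v z w := schwarz (contDiffAt_D hh v) w z

lemma DJ3_symm12 {S : Set X} (hS : IsOpen S) {h : X → ℝ}
    (hh : ∀ q ∈ S, ContDiffAt ℝ (⊤ : ℕ∞) h q) {x : X} (hx : x ∈ S) (v w z : X) :
    DJ3 h x v w z = DJ3 h x w v z := by
  unfold DJ3
  have ev : (fun q => DJ2 h q v w) =ᶠ[nhds x] (fun q => DJ2 h q w v) :=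
    Filter.eventually_of_mem (hS.mem_nhds hx) (fun q hq => DJ2_symm (hh q hq) v w)
  unfold DJ
  rw [ev.fderiv_eq]

lemma DJ_snd {Y : Type*} [NormedAddCommGroup Y] [NormedSpace ℝ Y]
    {g : Y → ℝ} {p : ℝ × Y} (hg : DifferentiableAt ℝ g p.2) (v : ℝ × Y) :
    DJ (fun q : ℝ × Y => g q.2) p v = fderiv ℝ g p.2 v.2 := by
  have h1 : HasFDerivAt (fun q : ℝ × Y => g q.2)
      ((fderiv ℝ g p.2).comp (ContinuousLinearMap.snd ℝ ℝ Y)) p :=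
    (hg.hasFDerivAt).comp p (hasFDerivAt_snd)
  rw [DJ, h1.fderiv]
  rfl

end DJn

-- conversion lemmas on ℝ × Euclidean space
section conv
variable {n : ℕ}

def τJ (n : ℕ) : ℝ × EuclideanSpace ℝ (Fin n) := (1, 0)

def εJ (n : ℕ) (i : Fin n) : ℝ × EuclideanSpace ℝ (Fin n) := (0, ee n i)

variable {h : ℝ × EuclideanSpace ℝ (Fin n) → ℝ} {t : ℝ} {x : EuclideanSpace ℝ (Fin n)}

lemma conv_fderiv (hh : ∀ q : ℝ × EuclideanSpace ℝ (Fin n), 0 < q.1 → ContDiffAt ℝ (⊤ : ℕ∞) h q)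
    (ht : 0 < t) (v : EuclideanSpace ℝ (Fin n)) :
    fderiv ℝ (fun y => h (t, y)) x v = DJ h (t, x) (0, v) :=
  fderiv_slice_space ((hh _ ht).differentiableAt (by simp)) v

lemma hh_DJ (hh : ∀ q : ℝ × EuclideanSpace ℝ (Fin n), 0 < q.1 → ContDiffAt ℝ (⊤ : ℕ∞) h q)
    (v : ℝ × EuclideanSpace ℝ (Fin n)) :
    ∀ q : ℝ × EuclideanSpace ℝ (Fin n), 0 < q.1 → ContDiffAt ℝ (⊤ : ℕ∞) (fun q => DJ h q v) q :=
  fun q hq => contDiffAt_DJ (hh q hq) v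

lemma conv_hess (hh : ∀ q : ℝ × EuclideanSpace ℝ (Fin n), 0 < q.1 → ContDiffAt ℝ (⊤ : ℕ∞) h q)
    (ht : 0 < t) (i j : Fin n) :
    hess n (fun y => h (t, y)) x (ee n i) (ee n j) = DJ2 h (t, x) (εJ n i) (εJ n j) := by
  unfold hess
  have e1 : (fun y => fderiv ℝ (fun z => h (t, z)) y (ee n i))
      = fun y => DJ h (t, y) (εJ n i) := by
    funext y
    exact conv_fderiv hh ht (ee n i)
  rw [e1]
  exact conv_fderiv (hh_DJ hh (εJ n i)) ht (ee n j)

lemma conv_lap (hh : ∀ q : ℝ × EuclideanSpace ℝ (Fin n), 0 < q.1 → ContDiffAt ℝ (⊤ : ℕ∞) h q)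
    (ht : 0 < t) :
    lap n (fun y => h (t, y)) x = ∑ i, DJ2 h (t, x) (εJ n i) (εJ n i) := by
  unfold lap
  exact Finset.sum_congr rfl fun i _ => conv_hess hh ht i i

lemma conv_deriv (hh : ∀ q : ℝ × EuclideanSpace ℝ (Fin n), 0 < q.1 → ContDiffAt ℝ (⊤ : ℕ∞) h q)
    (ht : 0 < t) :
    deriv (fun s => h (s, x)) t = DJ h (t, x) (τJ n) :=
  deriv_slice_time ((hh _ ht).differentiableAt (by simp))

lemma DJ_inv {X : Type*} [NormedAddCommGroup X] [NormedSpace ℝ X]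
    {A : X → ℝ} {x : X} (hA : DifferentiableAt ℝ A x) (hz : A x ≠ 0) (v : X) :
    DJ (fun y => (A y)⁻¹) x v = -((A x)⁻¹) ^ 2 * DJ A x v := by
  have h1 : HasFDerivAt (fun y => (A y)⁻¹)
      ((-ContinuousLinearMap.mulLeftRight ℝ ℝ (A x)⁻¹ (A x)⁻¹).comp (fderiv ℝ A x)) x :=
    (hasFDerivAt_inv' hz).comp x hA.hasFDerivAt
  rw [DJ, h1.fderiv]
  simp [DJ, ContinuousLinearMap.mulLeftRight_apply]
  ring

section heat
variable {n : ℕ} {φ : EuclideanSpace ℝ (Fin n) → ℝ}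
  {u : ℝ → EuclideanSpace ℝ (Fin n) → ℝ}

lemma hopen : IsOpen {p : ℝ × EuclideanSpace ℝ (Fin n) | 0 < p.1} :=
  isOpen_lt continuous_const continuous_fst

lemma contDiffAt_U
    (hu : ContDiffOn ℝ (⊤ : ℕ∞) (fun p : ℝ × EuclideanSpace ℝ (Fin n) => u p.1 p.2)
      {p : ℝ × EuclideanSpace ℝ (Fin n) | 0 < p.1}) :
    ∀ q : ℝ × EuclideanSpace ℝ (Fin n), 0 < q.1 →
      ContDiffAt ℝ (⊤ : ℕ∞) (fun p : ℝ × EuclideanSpace ℝ (Fin n) => u p.1 p.2) q :=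
  fun q hq => hu.contDiffAt (hopen.mem_nhds hq)

lemma contDiffAt_logu
    (hu : ContDiffOn ℝ (⊤ : ℕ∞) (fun p : ℝ × EuclideanSpace ℝ (Fin n) => u p.1 p.2)
      {p : ℝ × EuclideanSpace ℝ (Fin n) | 0 < p.1})
    (hpos : ∀ t > (0 : ℝ), ∀ x, 0 < u t x) :
    ∀ q : ℝ × EuclideanSpace ℝ (Fin n), 0 < q.1 →
      ContDiffAt ℝ (⊤ : ℕ∞) (fun p : ℝ × EuclideanSpace ℝ (Fin n) => Real.log (u p.1 p.2)) q :=
  fun q hq => (Real.contDiffAt_log.mpr (hpos q.1 hq q.2).ne').comp (g := Real.log) q (contDiffAt_U hu q hq)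

lemma contDiffAt_slice
    (hu : ContDiffOn ℝ (⊤ : ℕ∞) (fun p : ℝ × EuclideanSpace ℝ (Fin n) => u p.1 p.2)
      {p : ℝ × EuclideanSpace ℝ (Fin n) | 0 < p.1})
    {s : ℝ} (hs : 0 < s) (z : EuclideanSpace ℝ (Fin n)) :
    ContDiffAt ℝ (⊤ : ℕ∞) (u s) z := by
  have := (contDiffAt_U hu (s, z) hs).comp z
    ((contDiffAt_const (c := s)).prodMk contDiffAt_id)
  exact this

lemma heat_log
    (hu : ContDiffOn ℝ (⊤ : ℕ∞) (fun p : ℝ × EuclideanSpace ℝ (Fin n) => u p.1 p.2)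
      {p : ℝ × EuclideanSpace ℝ (Fin n) | 0 < p.1})
    (hpos : ∀ t > (0 : ℝ), ∀ x, 0 < u t x)
    (hheat : ∀ t > (0 : ℝ), ∀ x, deriv (fun s => u s x) t = witten n φ (u t) x) :
    ∀ q : ℝ × EuclideanSpace ℝ (Fin n), 0 < q.1 →
      DJ (fun r => Real.log (u r.1 r.2)) q (τJ n)
        = ∑ i, DJ2 (fun r => Real.log (u r.1 r.2)) q (εJ n i) (εJ n i)
          - ∑ i, fderiv ℝ φ q.2 (ee n i) * DJ (fun r => Real.log (u r.1 r.2)) q (εJ n i)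
          + ∑ i, (DJ (fun r => Real.log (u r.1 r.2)) q (εJ n i)) ^ 2 := by
  rintro ⟨s, y⟩ hs
  have hs' : (0 : ℝ) < s := hs
  set L : ℝ × EuclideanSpace ℝ (Fin n) → ℝ := fun r => Real.log (u r.1 r.2) with hLdef
  have hL := contDiffAt_logu hu hpos
  have hU := hpos s hs' y
  have hUne : u s y ≠ 0 := hU.ne'
  have hus : ∀ z, ContDiffAt ℝ (⊤ : ℕ∞) (u s) z := contDiffAt_slice hu hs'
  have husd : ∀ z, DifferentiableAt ℝ (u s) z := fun z => (hus z).differentiableAt (by simp)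
  have hfs : ∀ z : EuclideanSpace ℝ (Fin n),
      fderiv ℝ (fun w => Real.log (u s w)) z = (u s z)⁻¹ • fderiv ℝ (u s) z :=
    fun z => fderiv.log (husd z) (hpos s hs' z).ne'
  -- gradient coordinates of log u
  have gi : ∀ i, DJ L (s, y) (εJ n i) = (u s y)⁻¹ * fderiv ℝ (u s) y (ee n i) := by
    intro i
    have h1 := conv_fderiv (h := L) hL hs' (x := y) (ee n i)
    rw [show (fun z => L (s, z)) = fun z => Real.log (u s z) from rfl] at h1
    rw [show (εJ n i) = ((0 : ℝ), ee n i) from rfl, ← h1, hfs y]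
    simp
  -- Hessian diagonal entries of log u
  have hij : ∀ i, DJ2 L (s, y) (εJ n i) (εJ n i)
      = (u s y)⁻¹ * hess n (u s) y (ee n i) (ee n i)
        - ((u s y)⁻¹) ^ 2 * (fderiv ℝ (u s) y (ee n i)) ^ 2 := by
    intro i
    have h1 := conv_hess (h := L) hL hs' (x := y) i i
    rw [show (fun z => L (s, z)) = fun z => Real.log (u s z) from rfl] at h1
    rw [← h1]
    unfold hess
    have e1 : (fun z => fderiv ℝ (fun w => Real.log (u s w)) z (ee n i))
        = fun z => (u s z)⁻¹ * DJ (u s) z (ee n i) := by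
      funext z
      rw [hfs z]; simp [DJ]
    rw [e1]
    have hinv : DifferentiableAt ℝ (fun z => (u s z)⁻¹) y :=
      (husd y).inv hUne
    have hG : DifferentiableAt ℝ (fun z => DJ (u s) z (ee n i)) y :=
      diffAt_DJ (hus y) (ee n i)
    have h2 := DJ_mul (A := fun z => (u s z)⁻¹) (B := fun z => DJ (u s) z (ee n i))
      hinv hG (ee n i)
    rw [show fderiv ℝ (fun z => (u s z)⁻¹ * DJ (u s) z (ee n i)) y (ee n i)
        = DJ (fun z => (u s z)⁻¹ * DJ (u s) z (ee n i)) y (ee n i) from rfl, h2,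
      DJ_inv (husd y) hUne]
    unfold DJ
    ring
  -- time derivative of log u
  have hderiv : DifferentiableAt ℝ (fun r => u r y) s := by
    have := ((contDiffAt_U hu (s, y) hs').differentiableAt (by simp)).comp (f := fun r => (r, y)) s
      ((differentiableAt_id).prodMk (differentiableAt_const y))
    exact this
  have hti : DJ L (s, y) (τJ n) = (u s y)⁻¹ * deriv (fun r => u r y) s := by
    have h1 := conv_deriv (h := L) hL hs' (x := y)
    rw [show (fun r => L (r, y)) = fun r => Real.log (u r y) from rfl] at h1
    rw [← h1]
    have h2 := (hderiv.hasDerivAt.log hUne).deriv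
    rw [show (fun r => Real.log (u r y)) = fun r => Real.log ((fun r' => u r' y) r) from rfl,
      h2]
    field_simp
  rw [hti, hheat s hs' y]
  unfold witten lap
  rw [inner_grads φ (u s) y]
  simp only [hij, gi]
  rw [mul_sub, Finset.mul_sum, Finset.mul_sum,
    ← Finset.sum_sub_distrib, ← Finset.sum_sub_distrib, ← Finset.sum_add_distrib]
  apply Finset.sum_congr rfl
  intro i _
  simp only [ee]
  ring
end heat

lemma DJ_const_mul {X : Type*} [NormedAddCommGroup X] [NormedSpace ℝ X]
    {A : X → ℝ} {p : X} (hA : DifferentiableAt ℝ A p) (c : ℝ) (v : X) :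
    DJ (fun q => c * A q) p v = c * DJ A p v := by
  simp only [DJ, fderiv_const_mul hA c]; rfl

lemma DJ_linear {X : Type*} [NormedAddCommGroup X] [NormedSpace ℝ X]
    (A : X → ℝ) (p : X) {ι : Type*} (s : Finset ι) (c : ι → ℝ) (w : ι → X) :
    DJ A p (∑ j ∈ s, c j • w j) = ∑ j ∈ s, c j * DJ A p (w j) := by
  simp [DJ]

lemma hess_bilin {n : ℕ} {φ : EuclideanSpace ℝ (Fin n) → ℝ} (hφ : ContDiff ℝ (⊤ : ℕ∞) φ)
    (x v w : EuclideanSpace ℝ (Fin n)) :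
    hess n φ x v w = ∑ i, ∑ j, v i * w j * hess n φ x (ee n i) (ee n j) := by
  have e1 : (fun y => fderiv ℝ φ y v) = fun y => ∑ i, v i * DJ φ y (ee n i) := by
    funext y
    conv_lhs => rw [euclid_expand v]
    exact DJ_linear φ y Finset.univ (fun i => v i) (fun i => ee n i)
  unfold hess
  rw [e1]
  have hdiff : ∀ i : Fin n, DifferentiableAt ℝ (fun y => DJ φ y (ee n i)) x :=
    fun i => diffAt_DJ hφ.contDiffAt (ee n i)
  have e2 := DJ_sum (A := fun i y => v i * DJ φ y (ee n i)) (p := x)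
    (s := Finset.univ) (fun i _ => (hdiff i).const_mul (v i)) w
  rw [show fderiv ℝ (fun y => ∑ i, v i * DJ φ y (ee n i)) x w
      = DJ (fun y => ∑ i, v i * DJ φ y (ee n i)) x w from rfl, e2]
  apply Finset.sum_congr rfl
  intro i _
  rw [DJ_const_mul (hdiff i) (v i)]
  have e3 : DJ (fun y => DJ φ y (ee n i)) x w
      = ∑ j, w j * DJ (fun y => DJ φ y (ee n i)) x (ee n j) := by
    conv_lhs => rw [euclid_expand w]
    exact DJ_linear _ x Finset.univ (fun j => w j) (fun j => ee n j)
  rw [e3, Finset.mul_sum]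
  apply Finset.sum_congr rfl
  intro j _
  unfold DJ
  ring


lemma final_algebra (n : ℕ) (K t a b a' b' P Pt : ℝ)
    (g Pv W ph : Fin n → ℝ) (h T phh : Fin n → Fin n → ℝ)
    (ht : t ≠ 0)
    (ha' : t * a' = (1 - 4*K*t) * a)
    (hb' : t * b' = (1 - 2*K*t) * b)
    (hsymh : ∀ i j, h i j = h j i)
    (hR2 : ∀ j, Pv j = (∑ i, T i j) - (∑ i, (ph i * h i j + g i * phh i j))
      + ∑ i, 2 * g i * h i j)
    (hR3 : Pt = (∑ i, W i) - (∑ i, ph i * Pv i) + ∑ i, 2 * g i * Pv i) :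
    ((∑ j, (a * (∑ i, 2 * (h i j * h i j + g i * T j i)) - b * W j))
      - ∑ j, ph j * (a * (∑ i, 2 * g i * h i j) - b * Pv j))
    - (a' * (∑ i, g i ^ 2) + a * (∑ i, 2 * g i * Pv i) - (b' * P + b * Pt))
    = 2 * a * (∑ i, ∑ j, (h i j) ^ 2)
      - 2 * (∑ i, (a * (∑ j, 2 * g j * h j i) - b * Pv i) * g i)
      + 2 * a * ((∑ i, ∑ j, g i * g j * phh i j) + K * (∑ i, g i ^ 2))
      + ((2*K*t - 1)/t) * (a * (∑ i, g i ^ 2) - b * P) := by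
  have hA : a' = (1 - 4*K*t) * a / t := by field_simp; linear_combination ha'
  have hB : b' = (1 - 2*K*t) * b / t := by field_simp; linear_combination hb'
  subst hA hB
  simp only [hR3, hR2]
  simp only [Finset.mul_sum, Finset.sum_mul, mul_add, add_mul, mul_sub, sub_mul,
    Finset.sum_add_distrib, Finset.sum_sub_distrib]
  ring_nf
  have htt : t * t⁻¹ = 1 := mul_inv_cancel₀ ht
  have r1 : ∑ x : Fin n, ∑ x_1 : Fin n, a * h x_1 x ^ 2 * 2
      = ∑ x : Fin n, ∑ x_1 : Fin n, a * h x x_1 ^ 2 * 2 := by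
    rw [Finset.sum_comm]
  have r2 : ∑ x : Fin n, ∑ x_1 : Fin n, a * g x_1 * T x x_1 * 2
      = ∑ x : Fin n, ∑ x_1 : Fin n, a * g x * T x_1 x * 2 := by
    rw [Finset.sum_comm]
  have r3 : ∑ x : Fin n, ∑ x_1 : Fin n, a * ph x * g x_1 * h x_1 x * 2
      = ∑ x : Fin n, ∑ x_1 : Fin n, a * g x * ph x_1 * h x_1 x * 2 := by
    rw [Finset.sum_comm]
    refine Finset.sum_congr rfl fun x _ => Finset.sum_congr rfl fun y _ => ?_
    rw [hsymh x y]; ring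
  have r4 : ∑ x : Fin n, ∑ x_1 : Fin n, a * g x * g x_1 * phh x_1 x * 2
      = ∑ x : Fin n, ∑ x_1 : Fin n, a * g x * g x_1 * phh x x_1 * 2 := by
    rw [Finset.sum_comm]
    exact Finset.sum_congr rfl fun x _ => Finset.sum_congr rfl fun y _ => by ring
  have r5 : ∑ x : Fin n, ∑ x_1 : Fin n, a * g x * g x_1 * h x_1 x * 4
      = ∑ x : Fin n, ∑ x_1 : Fin n, a * g x_1 * h x_1 x * g x * 4 :=
    Finset.sum_congr rfl fun x _ => Finset.sum_congr rfl fun y _ => by ring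
  have r6 : ∑ x : Fin n, ∑ x_1 : Fin n, b * g x * T x_1 x * 2
      = ∑ x : Fin n, ∑ x_1 : Fin n, b * T x_1 x * g x * 2 :=
    Finset.sum_congr rfl fun x _ => Finset.sum_congr rfl fun y _ => by ring
  have r7 : ∑ x : Fin n, ∑ x_1 : Fin n, b * g x * ph x_1 * h x_1 x * 2
      = ∑ x : Fin n, ∑ x_1 : Fin n, b * ph x_1 * h x_1 x * g x * 2 :=
    Finset.sum_congr rfl fun x _ => Finset.sum_congr rfl fun y _ => by ring
  have r8 : ∑ x : Fin n, ∑ x_1 : Fin n, b * g x * g x_1 * phh x_1 x * 2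
      = ∑ x : Fin n, ∑ x_1 : Fin n, b * g x_1 * phh x_1 x * g x * 2 :=
    Finset.sum_congr rfl fun x _ => Finset.sum_congr rfl fun y _ => by ring
  have r9 : ∑ x : Fin n, ∑ x_1 : Fin n, b * g x * g x_1 * h x_1 x * 4
      = ∑ x : Fin n, ∑ x_1 : Fin n, b * g x_1 * h x_1 x * g x * 4 :=
    Finset.sum_congr rfl fun x _ => Finset.sum_congr rfl fun y _ => by ring
  have s1 : ∑ x : Fin n, (-(a * K * t * t⁻¹ * g x ^ 2 * 4) + a * t⁻¹ * g x ^ 2)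
      = (-(a * K * t * t⁻¹ * 4) + a * t⁻¹) * ∑ x : Fin n, g x ^ 2 := by
    rw [Finset.mul_sum]
    exact Finset.sum_congr rfl fun x _ => by ring
  have s2 : ∑ x : Fin n, a * K * g x ^ 2 * 2 = a * K * 2 * ∑ x : Fin n, g x ^ 2 := by
    rw [Finset.mul_sum]
    exact Finset.sum_congr rfl fun x _ => by ring
  have s3 : ∑ x : Fin n, (a * K * t * t⁻¹ * g x ^ 2 * 2 - a * t⁻¹ * g x ^ 2)
      = (a * K * t * t⁻¹ * 2 - a * t⁻¹) * ∑ x : Fin n, g x ^ 2 := by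
    rw [Finset.mul_sum]
    exact Finset.sum_congr rfl fun x _ => by ring
  linear_combination r1 + r2 - r3 + r4 - r5 + r6 - r7 - r8 + r9
    - s1 - s2 - s3 + (2 * a * K * (∑ x : Fin n, g x ^ 2)) * htt



/-- Key evolution identity for `F = t e^{−4Kt}|∇f|² − t e^{−2Kt}∂ₜf`, `f = log u`, along
the heat equation of the Witten Laplacian on `ℝⁿ` (Euclidean case, where `Ric(L) = ∇²φ`):
`(L − ∂ₜ)F = 2te^{−4Kt}|∇²f|² − 2⟨∇F, ∇f⟩ + 2te^{−4Kt}(∇²φ(∇f,∇f) + K|∇f|²) + ((2Kt−1)/t)F`. -/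
theorem evolution_identity_F
    (n : ℕ) (hn : 1 ≤ n) (K : ℝ) (hK : 0 ≤ K)
    (φ : EuclideanSpace ℝ (Fin n) → ℝ) (hφ : ContDiff ℝ (⊤ : ℕ∞) φ)
    (u : ℝ → EuclideanSpace ℝ (Fin n) → ℝ)
    (hu : ContDiffOn ℝ (⊤ : ℕ∞) (fun p : ℝ × EuclideanSpace ℝ (Fin n) => u p.1 p.2)
      {p : ℝ × EuclideanSpace ℝ (Fin n) | 0 < p.1})
    (hpos : ∀ t > (0 : ℝ), ∀ x, 0 < u t x)
    (hheat : ∀ t > (0 : ℝ), ∀ x, deriv (fun s => u s x) t = witten n φ (u t) x)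
    (f : ℝ → EuclideanSpace ℝ (Fin n) → ℝ)
    (hf : f = fun t x => Real.log (u t x))
    (F : ℝ → EuclideanSpace ℝ (Fin n) → ℝ)
    (hF : F = fun t x =>
      t * Real.exp (-4 * K * t) * ‖gradient (f t) x‖ ^ 2
        - t * Real.exp (-2 * K * t) * deriv (fun s => f s x) t) :
    ∀ t > (0 : ℝ), ∀ x,
      witten n φ (F t) x - deriv (fun s => F s x) t
        = 2 * t * Real.exp (-4 * K * t) * hessNormSq n (f t) x
          - 2 * ⟪gradient (F t) x, gradient (f t) x⟫
          + 2 * t * Real.exp (-4 * K * t) *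
              (hess n φ x (gradient (f t) x) (gradient (f t) x)
                + K * ‖gradient (f t) x‖ ^ 2)
          + ((2 * K * t - 1) / t) * F t x := by
  intro t ht x
  have hne : t ≠ 0 := ne_of_gt ht
  set L : ℝ × EuclideanSpace ℝ (Fin n) → ℝ := fun r => Real.log (u r.1 r.2) with hLdef
  have hL : ∀ q : ℝ × EuclideanSpace ℝ (Fin n), 0 < q.1 → ContDiffAt ℝ (⊤ : ℕ∞) L q :=
    contDiffAt_logu hu hpos
  -- coefficient functions
  have hcA : ContDiff ℝ (⊤ : ℕ∞) (fun s : ℝ => s * Real.exp (-4 * K * s)) :=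
    contDiff_id.mul (Real.contDiff_exp.comp (contDiff_const.mul contDiff_id))
  have hcB : ContDiff ℝ (⊤ : ℕ∞) (fun s : ℝ => s * Real.exp (-2 * K * s)) :=
    contDiff_id.mul (Real.contDiff_exp.comp (contDiff_const.mul contDiff_id))
  -- the joint function representing F
  set Ft : ℝ × EuclideanSpace ℝ (Fin n) → ℝ := fun q =>
    q.1 * Real.exp (-4 * K * q.1) * (∑ i, (DJ L q (εJ n i)) ^ 2)
      - q.1 * Real.exp (-2 * K * q.1) * DJ L q (τJ n) with hFtdef
  have hNq : ∀ q : ℝ × EuclideanSpace ℝ (Fin n), 0 < q.1 →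
      ContDiffAt ℝ (⊤ : ℕ∞) (fun q => ∑ i, (DJ L q (εJ n i)) ^ 2) q :=
    fun q hq => ContDiffAt.sum (fun i _ => (contDiffAt_DJ (hL q hq) (εJ n i)).pow 2)
  have hPq : ∀ q : ℝ × EuclideanSpace ℝ (Fin n), 0 < q.1 →
      ContDiffAt ℝ (⊤ : ℕ∞) (fun q => DJ L q (τJ n)) q :=
    fun q hq => contDiffAt_DJ (hL q hq) (τJ n)
  have hFtsm : ∀ q : ℝ × EuclideanSpace ℝ (Fin n), 0 < q.1 → ContDiffAt ℝ (⊤ : ℕ∞) Ft q := by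
    intro q hq
    exact (((hcA.comp contDiff_fst).contDiffAt).mul (hNq q hq)).sub
      (((hcB.comp contDiff_fst).contDiffAt).mul (hPq q hq))
  -- slices of f
  have hfs : ∀ s : ℝ, f s = fun y => L (s, y) := by
    intro s; funext y; rw [hf]
  -- F representation
  have hFrep : ∀ s, 0 < s → ∀ y, F s y = Ft (s, y) := by
    intro s hs y
    have e1 : ‖gradient (f s) y‖ ^ 2 = ∑ i, (DJ L (s, y) (εJ n i)) ^ 2 := by
      rw [hfs s, norm_grad_sq]
      refine Finset.sum_congr rfl fun i _ => ?_
      rw [conv_fderiv hL hs (ee n i)]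
      rfl
    have e2 : deriv (fun r => f r y) s = DJ L (s, y) (τJ n) := by
      rw [show (fun r => f r y) = fun r => L (r, y) from by funext r; rw [hfs r]]
      exact conv_deriv hL hs
    simp only [hF]
    rw [e1, e2]
  have hFteq : F t = fun y => Ft (t, y) := funext fun y => hFrep t ht y
  -- derivative of the |grad|^2 part
  have eNgen : ∀ q : ℝ × EuclideanSpace ℝ (Fin n), 0 < q.1 →
      ∀ w : ℝ × EuclideanSpace ℝ (Fin n),
      DJ (fun q => ∑ i, (DJ L q (εJ n i)) ^ 2) q w
        = ∑ i, 2 * DJ L q (εJ n i) * DJ2 L q (εJ n i) w := by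
    intro q hq w
    rw [DJ_sum (fun i _ => (diffAt_DJ (hL q hq) (εJ n i)).fun_pow 2) w]
    exact Finset.sum_congr rfl fun i _ => DJ_sq (diffAt_DJ (hL q hq) (εJ n i)) w
  -- first derivatives of Ft in spatial directions
  have HA1 : ∀ q : ℝ × EuclideanSpace ℝ (Fin n), 0 < q.1 → ∀ j,
      DJ Ft q (εJ n j)
        = q.1 * Real.exp (-4 * K * q.1)
            * (∑ i, 2 * DJ L q (εJ n i) * DJ2 L q (εJ n i) (εJ n j))
          - q.1 * Real.exp (-2 * K * q.1) * DJ2 L q (τJ n) (εJ n j) := by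
    intro q hq j
    have hNd : DifferentiableAt ℝ (fun q => ∑ i, (DJ L q (εJ n i)) ^ 2) q :=
      (hNq q hq).differentiableAt (by simp)
    have hPd : DifferentiableAt ℝ (fun q => DJ L q (τJ n)) q :=
      (hPq q hq).differentiableAt (by simp)
    have hAd : DifferentiableAt ℝ
        (fun q : ℝ × EuclideanSpace ℝ (Fin n) => q.1 * Real.exp (-4 * K * q.1)) q :=
      ((hcA.comp contDiff_fst).differentiable (by simp)) q
    have hBd : DifferentiableAt ℝ
        (fun q : ℝ × EuclideanSpace ℝ (Fin n) => q.1 * Real.exp (-2 * K * q.1)) q :=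
      ((hcB.comp contDiff_fst).differentiable (by simp)) q
    have e0 : DJ Ft q (εJ n j)
        = DJ (fun q => q.1 * Real.exp (-4 * K * q.1) * (∑ i, (DJ L q (εJ n i)) ^ 2)) q (εJ n j)
          - DJ (fun q => q.1 * Real.exp (-2 * K * q.1) * DJ L q (τJ n)) q (εJ n j) :=
      DJ_sub (hAd.mul hNd) (hBd.mul hPd) _
    have e1 : DJ (fun q => q.1 * Real.exp (-4 * K * q.1) * (∑ i, (DJ L q (εJ n i)) ^ 2)) q
          (εJ n j)
        = (q.1 * Real.exp (-4 * K * q.1))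
              * DJ (fun q => ∑ i, (DJ L q (εJ n i)) ^ 2) q (εJ n j)
          + (∑ i, (DJ L q (εJ n i)) ^ 2)
              * DJ (fun q : ℝ × EuclideanSpace ℝ (Fin n) =>
                  q.1 * Real.exp (-4 * K * q.1)) q (εJ n j) :=
      DJ_mul hAd hNd _
    have e2 : DJ (fun q => q.1 * Real.exp (-2 * K * q.1) * DJ L q (τJ n)) q (εJ n j)
        = (q.1 * Real.exp (-2 * K * q.1)) * DJ2 L q (τJ n) (εJ n j)
          + DJ L q (τJ n)
              * DJ (fun q : ℝ × EuclideanSpace ℝ (Fin n) =>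
                  q.1 * Real.exp (-2 * K * q.1)) q (εJ n j) :=
      DJ_mul hBd hPd _
    have eA0 : DJ (fun q : ℝ × EuclideanSpace ℝ (Fin n) =>
          q.1 * Real.exp (-4 * K * q.1)) q (εJ n j)
        = deriv (fun s : ℝ => s * Real.exp (-4 * K * s)) q.1 * (0 : ℝ) :=
      DJ_fst ((hcA.differentiable (by simp)) q.1) (εJ n j)
    have eB0 : DJ (fun q : ℝ × EuclideanSpace ℝ (Fin n) =>
          q.1 * Real.exp (-2 * K * q.1)) q (εJ n j)
        = deriv (fun s : ℝ => s * Real.exp (-2 * K * s)) q.1 * (0 : ℝ) :=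
      DJ_fst ((hcB.differentiable (by simp)) q.1) (εJ n j)
    rw [e0, e1, e2, eA0, eB0, eNgen q hq (εJ n j)]
    ring
  -- second spatial derivatives of Ft (diagonal)
  have HA3 : ∀ j, DJ2 Ft (t, x) (εJ n j) (εJ n j)
      = t * Real.exp (-4 * K * t)
          * (∑ i, 2 * (DJ2 L (t, x) (εJ n i) (εJ n j) * DJ2 L (t, x) (εJ n i) (εJ n j)
              + DJ L (t, x) (εJ n i) * DJ3 L (t, x) (εJ n j) (εJ n j) (εJ n i)))
        - t * Real.exp (-2 * K * t) * DJ3 L (t, x) (εJ n j) (εJ n j) (τJ n) := by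
    intro j
    have hev : (fun q => DJ Ft q (εJ n j)) =ᶠ[nhds ((t : ℝ), x)] (fun q =>
        q.1 * Real.exp (-4 * K * q.1)
            * (∑ i, 2 * DJ L q (εJ n i) * DJ2 L q (εJ n i) (εJ n j))
          - q.1 * Real.exp (-2 * K * q.1) * DJ2 L q (τJ n) (εJ n j)) :=
      Filter.eventually_of_mem ((hopen (n := n)).mem_nhds ht) (fun q hq => HA1 q hq j)
    have e0 : DJ2 Ft (t, x) (εJ n j) (εJ n j)
        = DJ (fun q =>
            q.1 * Real.exp (-4 * K * q.1)
                * (∑ i, 2 * DJ L q (εJ n i) * DJ2 L q (εJ n i) (εJ n j))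
              - q.1 * Real.exp (-2 * K * q.1) * DJ2 L q (τJ n) (εJ n j)) (t, x) (εJ n j) :=
      DFunLike.congr_fun hev.fderiv_eq (εJ n j)
    have hSd : DifferentiableAt ℝ
        (fun q => ∑ i, 2 * DJ L q (εJ n i) * DJ2 L q (εJ n i) (εJ n j)) ((t : ℝ), x) :=
      DifferentiableAt.fun_sum (fun i _ =>
        ((diffAt_DJ (hL _ ht) (εJ n i)).const_mul 2).mul (diffAt_DJ2 (hL _ ht) _ _))
    have hTd : DifferentiableAt ℝ (fun q => DJ2 L q (τJ n) (εJ n j)) ((t : ℝ), x) :=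
      diffAt_DJ2 (hL _ ht) _ _
    have hAd : DifferentiableAt ℝ
        (fun q : ℝ × EuclideanSpace ℝ (Fin n) => q.1 * Real.exp (-4 * K * q.1)) ((t : ℝ), x) :=
      ((hcA.comp contDiff_fst).differentiable (by simp)) _
    have hBd : DifferentiableAt ℝ
        (fun q : ℝ × EuclideanSpace ℝ (Fin n) => q.1 * Real.exp (-2 * K * q.1)) ((t : ℝ), x) :=
      ((hcB.comp contDiff_fst).differentiable (by simp)) _
    have e1 : DJ (fun q =>
          q.1 * Real.exp (-4 * K * q.1)
              * (∑ i, 2 * DJ L q (εJ n i) * DJ2 L q (εJ n i) (εJ n j))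
            - q.1 * Real.exp (-2 * K * q.1) * DJ2 L q (τJ n) (εJ n j)) (t, x) (εJ n j)
        = DJ (fun q => q.1 * Real.exp (-4 * K * q.1)
              * (∑ i, 2 * DJ L q (εJ n i) * DJ2 L q (εJ n i) (εJ n j))) (t, x) (εJ n j)
          - DJ (fun q => q.1 * Real.exp (-2 * K * q.1)
              * DJ2 L q (τJ n) (εJ n j)) (t, x) (εJ n j) :=
      DJ_sub (hAd.mul hSd) (hBd.mul hTd) _
    have e2 : DJ (fun q => q.1 * Real.exp (-4 * K * q.1)
          * (∑ i, 2 * DJ L q (εJ n i) * DJ2 L q (εJ n i) (εJ n j))) (t, x) (εJ n j)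
        = (t * Real.exp (-4 * K * t))
            * DJ (fun q => ∑ i, 2 * DJ L q (εJ n i) * DJ2 L q (εJ n i) (εJ n j)) (t, x)
                (εJ n j)
          + (∑ i, 2 * DJ L (t, x) (εJ n i) * DJ2 L (t, x) (εJ n i) (εJ n j))
            * DJ (fun q : ℝ × EuclideanSpace ℝ (Fin n) =>
                q.1 * Real.exp (-4 * K * q.1)) (t, x) (εJ n j) :=
      DJ_mul hAd hSd _
    have e3 : DJ (fun q => q.1 * Real.exp (-2 * K * q.1)
          * DJ2 L q (τJ n) (εJ n j)) (t, x) (εJ n j)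
        = (t * Real.exp (-2 * K * t)) * DJ3 L (t, x) (τJ n) (εJ n j) (εJ n j)
          + DJ2 L (t, x) (τJ n) (εJ n j)
            * DJ (fun q : ℝ × EuclideanSpace ℝ (Fin n) =>
                q.1 * Real.exp (-2 * K * q.1)) (t, x) (εJ n j) :=
      DJ_mul hBd hTd _
    have eA0 : DJ (fun q : ℝ × EuclideanSpace ℝ (Fin n) =>
          q.1 * Real.exp (-4 * K * q.1)) (t, x) (εJ n j)
        = deriv (fun s : ℝ => s * Real.exp (-4 * K * s)) t * (0 : ℝ) :=
      DJ_fst (p := (t, x)) ((hcA.differentiable (by simp)) t) (εJ n j)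
    have eB0 : DJ (fun q : ℝ × EuclideanSpace ℝ (Fin n) =>
          q.1 * Real.exp (-2 * K * q.1)) (t, x) (εJ n j)
        = deriv (fun s : ℝ => s * Real.exp (-2 * K * s)) t * (0 : ℝ) :=
      DJ_fst (p := (t, x)) ((hcB.differentiable (by simp)) t) (εJ n j)
    have eS : DJ (fun q => ∑ i, 2 * DJ L q (εJ n i) * DJ2 L q (εJ n i) (εJ n j)) (t, x)
          (εJ n j)
        = ∑ i, 2 * (DJ2 L (t, x) (εJ n i) (εJ n j) * DJ2 L (t, x) (εJ n i) (εJ n j)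
            + DJ L (t, x) (εJ n i) * DJ3 L (t, x) (εJ n j) (εJ n j) (εJ n i)) := by
      rw [DJ_sum (fun i _ =>
        ((diffAt_DJ (hL _ ht) (εJ n i)).const_mul 2).fun_mul (diffAt_DJ2 (hL _ ht) _ _)) (εJ n j)]
      refine Finset.sum_congr rfl fun i _ => ?_
      have hm : DJ (fun q => 2 * DJ L q (εJ n i) * DJ2 L q (εJ n i) (εJ n j)) (t, x) (εJ n j)
          = 2 * DJ L (t, x) (εJ n i) * DJ3 L (t, x) (εJ n i) (εJ n j) (εJ n j)
            + DJ2 L (t, x) (εJ n i) (εJ n j)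
              * DJ (fun q => 2 * DJ L q (εJ n i)) (t, x) (εJ n j) :=
        DJ_mul ((diffAt_DJ (hL _ ht) (εJ n i)).const_mul 2) (diffAt_DJ2 (hL _ ht) _ _) _
      have hcm : DJ (fun q => 2 * DJ L q (εJ n i)) (t, x) (εJ n j)
          = 2 * DJ2 L (t, x) (εJ n i) (εJ n j) :=
        DJ_const_mul (diffAt_DJ (hL _ ht) (εJ n i)) 2 (εJ n j)
      have hre : DJ3 L (t, x) (εJ n i) (εJ n j) (εJ n j)
          = DJ3 L (t, x) (εJ n j) (εJ n j) (εJ n i) :=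
        (DJ3_symm12 (hopen (n := n)) hL ht _ _ _).trans
          (DJ3_symm23 (hL _ ht) _ _ _)
      rw [hm, hcm, hre]
      ring
    have hre2 : DJ3 L (t, x) (τJ n) (εJ n j) (εJ n j)
        = DJ3 L (t, x) (εJ n j) (εJ n j) (τJ n) :=
      (DJ3_symm12 (hopen (n := n)) hL ht _ _ _).trans
        (DJ3_symm23 (hL _ ht) _ _ _)
    rw [e0, e1, e2, e3, eA0, eB0, eS, hre2]
    ring
  -- time derivative of Ft
  have HAt : DJ Ft (t, x) (τJ n)
      = deriv (fun s : ℝ => s * Real.exp (-4 * K * s)) t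
            * (∑ i, (DJ L (t, x) (εJ n i)) ^ 2)
          + t * Real.exp (-4 * K * t)
            * (∑ i, 2 * DJ L (t, x) (εJ n i) * DJ2 L (t, x) (τJ n) (εJ n i))
          - (deriv (fun s : ℝ => s * Real.exp (-2 * K * s)) t * DJ L (t, x) (τJ n)
            + t * Real.exp (-2 * K * t) * DJ2 L (t, x) (τJ n) (τJ n)) := by
    have hNd : DifferentiableAt ℝ (fun q => ∑ i, (DJ L q (εJ n i)) ^ 2) ((t : ℝ), x) :=
      (hNq _ ht).differentiableAt (by simp)
    have hPd : DifferentiableAt ℝ (fun q => DJ L q (τJ n)) ((t : ℝ), x) :=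
      (hPq _ ht).differentiableAt (by simp)
    have hAd : DifferentiableAt ℝ
        (fun q : ℝ × EuclideanSpace ℝ (Fin n) => q.1 * Real.exp (-4 * K * q.1)) ((t : ℝ), x) :=
      ((hcA.comp contDiff_fst).differentiable (by simp)) _
    have hBd : DifferentiableAt ℝ
        (fun q : ℝ × EuclideanSpace ℝ (Fin n) => q.1 * Real.exp (-2 * K * q.1)) ((t : ℝ), x) :=
      ((hcB.comp contDiff_fst).differentiable (by simp)) _
    have e0 : DJ Ft (t, x) (τJ n)
        = DJ (fun q => q.1 * Real.exp (-4 * K * q.1) * (∑ i, (DJ L q (εJ n i)) ^ 2)) (t, x)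
            (τJ n)
          - DJ (fun q => q.1 * Real.exp (-2 * K * q.1) * DJ L q (τJ n)) (t, x) (τJ n) :=
      DJ_sub (hAd.mul hNd) (hBd.mul hPd) _
    have e1 : DJ (fun q => q.1 * Real.exp (-4 * K * q.1) * (∑ i, (DJ L q (εJ n i)) ^ 2)) (t, x)
          (τJ n)
        = (t * Real.exp (-4 * K * t))
              * DJ (fun q => ∑ i, (DJ L q (εJ n i)) ^ 2) (t, x) (τJ n)
          + (∑ i, (DJ L (t, x) (εJ n i)) ^ 2)
              * DJ (fun q : ℝ × EuclideanSpace ℝ (Fin n) =>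
                  q.1 * Real.exp (-4 * K * q.1)) (t, x) (τJ n) :=
      DJ_mul hAd hNd _
    have e2 : DJ (fun q => q.1 * Real.exp (-2 * K * q.1) * DJ L q (τJ n)) (t, x) (τJ n)
        = (t * Real.exp (-2 * K * t)) * DJ2 L (t, x) (τJ n) (τJ n)
          + DJ L (t, x) (τJ n)
              * DJ (fun q : ℝ × EuclideanSpace ℝ (Fin n) =>
                  q.1 * Real.exp (-2 * K * q.1)) (t, x) (τJ n) :=
      DJ_mul hBd hPd _
    have eA0 : DJ (fun q : ℝ × EuclideanSpace ℝ (Fin n) =>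
          q.1 * Real.exp (-4 * K * q.1)) (t, x) (τJ n)
        = deriv (fun s : ℝ => s * Real.exp (-4 * K * s)) t * (1 : ℝ) :=
      DJ_fst (p := (t, x)) ((hcA.differentiable (by simp)) t) (τJ n)
    have eB0 : DJ (fun q : ℝ × EuclideanSpace ℝ (Fin n) =>
          q.1 * Real.exp (-2 * K * q.1)) (t, x) (τJ n)
        = deriv (fun s : ℝ => s * Real.exp (-2 * K * s)) t * (1 : ℝ) :=
      DJ_fst (p := (t, x)) ((hcB.differentiable (by simp)) t) (τJ n)
    have eswap : ∑ i, 2 * DJ L (t, x) (εJ n i) * DJ2 L (t, x) (εJ n i) (τJ n)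
        = ∑ i, 2 * DJ L (t, x) (εJ n i) * DJ2 L (t, x) (τJ n) (εJ n i) :=
      Finset.sum_congr rfl fun i _ => by rw [DJ2_symm (hL (t, x) ht) (εJ n i) (τJ n)]
    rw [e0, e1, e2, eA0, eB0, eNgen (t, x) ht (τJ n), eswap]
    ring
  -- differentiated heat equation
  have hRw : ∀ w : ℝ × EuclideanSpace ℝ (Fin n),
      DJ2 L (t, x) (τJ n) w
        = (∑ i, DJ3 L (t, x) (εJ n i) (εJ n i) w)
          - (∑ i, (fderiv ℝ φ x (ee n i) * DJ2 L (t, x) (εJ n i) w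
              + DJ L (t, x) (εJ n i)
                * fderiv ℝ (fun y => fderiv ℝ φ y (ee n i)) x w.2))
          + ∑ i, 2 * DJ L (t, x) (εJ n i) * DJ2 L (t, x) (εJ n i) w := by
    intro w
    have hev : (fun q => DJ L q (τJ n)) =ᶠ[nhds ((t : ℝ), x)] (fun q =>
        (∑ i, DJ2 L q (εJ n i) (εJ n i))
          - (∑ i, fderiv ℝ φ q.2 (ee n i) * DJ L q (εJ n i))
          + ∑ i, (DJ L q (εJ n i)) ^ 2) :=
      Filter.eventually_of_mem ((hopen (n := n)).mem_nhds ht)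
        (fun q hq => heat_log hu hpos hheat q hq)
    have e0 : DJ2 L (t, x) (τJ n) w
        = DJ (fun q =>
            (∑ i, DJ2 L q (εJ n i) (εJ n i))
              - (∑ i, fderiv ℝ φ q.2 (ee n i) * DJ L q (εJ n i))
              + ∑ i, (DJ L q (εJ n i)) ^ 2) (t, x) w :=
      DFunLike.congr_fun hev.fderiv_eq w
    have hphid : ∀ i, DifferentiableAt ℝ
        (fun q : ℝ × EuclideanSpace ℝ (Fin n) => fderiv ℝ φ q.2 (ee n i)) ((t : ℝ), x) :=
      fun i => (diffAt_DJ (hφ.contDiffAt) (ee n i)).comp _ differentiableAt_snd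
    have h2d : DifferentiableAt ℝ
        (fun q => ∑ i, DJ2 L q (εJ n i) (εJ n i)) ((t : ℝ), x) :=
      DifferentiableAt.fun_sum (fun i _ => diffAt_DJ2 (hL _ ht) _ _)
    have hmidd : DifferentiableAt ℝ
        (fun q => ∑ i, fderiv ℝ φ q.2 (ee n i) * DJ L q (εJ n i)) ((t : ℝ), x) :=
      DifferentiableAt.fun_sum (fun i _ => (hphid i).mul (diffAt_DJ (hL _ ht) _))
    have hNd : DifferentiableAt ℝ (fun q => ∑ i, (DJ L q (εJ n i)) ^ 2) ((t : ℝ), x) :=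
      (hNq _ ht).differentiableAt (by simp)
    have e1 : DJ (fun q =>
          (∑ i, DJ2 L q (εJ n i) (εJ n i))
            - (∑ i, fderiv ℝ φ q.2 (ee n i) * DJ L q (εJ n i))
            + ∑ i, (DJ L q (εJ n i)) ^ 2) (t, x) w
        = DJ (fun q =>
            (∑ i, DJ2 L q (εJ n i) (εJ n i))
              - (∑ i, fderiv ℝ φ q.2 (ee n i) * DJ L q (εJ n i))) (t, x) w
          + DJ (fun q => ∑ i, (DJ L q (εJ n i)) ^ 2) (t, x) w :=
      DJ_add (h2d.sub hmidd) hNd _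
    have e2 : DJ (fun q =>
          (∑ i, DJ2 L q (εJ n i) (εJ n i))
            - (∑ i, fderiv ℝ φ q.2 (ee n i) * DJ L q (εJ n i))) (t, x) w
        = DJ (fun q => ∑ i, DJ2 L q (εJ n i) (εJ n i)) (t, x) w
          - DJ (fun q => ∑ i, fderiv ℝ φ q.2 (ee n i) * DJ L q (εJ n i)) (t, x) w :=
      DJ_sub h2d hmidd _
    have e3 : DJ (fun q => ∑ i, DJ2 L q (εJ n i) (εJ n i)) (t, x) w
        = ∑ i, DJ3 L (t, x) (εJ n i) (εJ n i) w := by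
      rw [DJ_sum (fun i _ => diffAt_DJ2 (hL _ ht) _ _) w]
      rfl
    have e4 : DJ (fun q => ∑ i, fderiv ℝ φ q.2 (ee n i) * DJ L q (εJ n i)) (t, x) w
        = ∑ i, (fderiv ℝ φ x (ee n i) * DJ2 L (t, x) (εJ n i) w
            + DJ L (t, x) (εJ n i)
              * fderiv ℝ (fun y => fderiv ℝ φ y (ee n i)) x w.2) := by
      rw [DJ_sum (fun i _ => (hphid i).fun_mul (diffAt_DJ (hL _ ht) _)) w]
      refine Finset.sum_congr rfl fun i _ => ?_
      have hm : DJ (fun q => fderiv ℝ φ q.2 (ee n i) * DJ L q (εJ n i)) (t, x) w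
          = fderiv ℝ φ x (ee n i) * DJ2 L (t, x) (εJ n i) w
            + DJ L (t, x) (εJ n i)
              * DJ (fun q : ℝ × EuclideanSpace ℝ (Fin n) =>
                  fderiv ℝ φ q.2 (ee n i)) (t, x) w :=
        DJ_mul (hphid i) (diffAt_DJ (hL _ ht) _) _
      have hsnd : DJ (fun q : ℝ × EuclideanSpace ℝ (Fin n) =>
            fderiv ℝ φ q.2 (ee n i)) (t, x) w
          = fderiv ℝ (fun y => fderiv ℝ φ y (ee n i)) x w.2 :=
        DJ_snd (g := fun y => fderiv ℝ φ y (ee n i)) (p := ((t : ℝ), x))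
          (diffAt_DJ (hφ.contDiffAt) (ee n i)) w
      rw [hm, hsnd]
    rw [e0, e1, e2, e3, e4, eNgen (t, x) ht w]
  have hR2' : ∀ j, DJ2 L (t, x) (τJ n) (εJ n j)
      = (∑ i, DJ3 L (t, x) (εJ n i) (εJ n i) (εJ n j))
        - (∑ i, (fderiv ℝ φ x (ee n i) * DJ2 L (t, x) (εJ n i) (εJ n j)
            + DJ L (t, x) (εJ n i) * hess n φ x (ee n i) (ee n j)))
        + ∑ i, 2 * DJ L (t, x) (εJ n i) * DJ2 L (t, x) (εJ n i) (εJ n j) := by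
    intro j
    rw [hRw (εJ n j)]
    rfl
  have hR3' : DJ2 L (t, x) (τJ n) (τJ n)
      = (∑ i, DJ3 L (t, x) (εJ n i) (εJ n i) (τJ n))
        - (∑ i, fderiv ℝ φ x (ee n i) * DJ2 L (t, x) (τJ n) (εJ n i))
        + ∑ i, 2 * DJ L (t, x) (εJ n i) * DJ2 L (t, x) (τJ n) (εJ n i) := by
    rw [hRw (τJ n)]
    congr 1
    · congr 1
      refine Finset.sum_congr rfl fun i _ => ?_
      rw [show ((τJ n : ℝ × EuclideanSpace ℝ (Fin n)).2) = (0 : EuclideanSpace ℝ (Fin n))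
          from rfl]
      rw [(fderiv ℝ (fun y => fderiv ℝ φ y (ee n i)) x).map_zero, mul_zero, add_zero,
        DJ2_symm (hL (t, x) ht) (εJ n i) (τJ n)]
    · exact Finset.sum_congr rfl fun i _ => by
        rw [DJ2_symm (hL (t, x) ht) (εJ n i) (τJ n)]
  -- symmetry of the spatial Hessian of L
  have hsymL : ∀ i j, DJ2 L (t, x) (εJ n i) (εJ n j) = DJ2 L (t, x) (εJ n j) (εJ n i) :=
    fun i j => DJ2_symm (hL (t, x) ht) _ _
  -- derivative coefficients
  have ha' : t * deriv (fun s : ℝ => s * Real.exp (-4 * K * s)) t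
      = (1 - 4 * K * t) * (t * Real.exp (-4 * K * t)) := by
    have h1 : HasDerivAt (fun s : ℝ => s * Real.exp (-4 * K * s))
        (1 * Real.exp (-4 * K * t) + t * (Real.exp (-4 * K * t) * (-4 * K * 1))) t :=
      (hasDerivAt_id t).mul ((Real.hasDerivAt_exp (-4 * K * t)).comp t
        ((hasDerivAt_id t).const_mul (-4 * K)))
    rw [h1.deriv]; ring
  have hb' : t * deriv (fun s : ℝ => s * Real.exp (-2 * K * s)) t
      = (1 - 2 * K * t) * (t * Real.exp (-2 * K * t)) := by
    have h1 : HasDerivAt (fun s : ℝ => s * Real.exp (-2 * K * s))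
        (1 * Real.exp (-2 * K * t) + t * (Real.exp (-2 * K * t) * (-2 * K * 1))) t :=
      (hasDerivAt_id t).mul ((Real.hasDerivAt_exp (-2 * K * t)).comp t
        ((hasDerivAt_id t).const_mul (-2 * K)))
    rw [h1.deriv]; ring
  -- conversions of the goal's pieces
  have HW : witten n φ (F t) x
      = (∑ j, DJ2 Ft (t, x) (εJ n j) (εJ n j))
        - ∑ j, fderiv ℝ φ x (ee n j) * DJ Ft (t, x) (εJ n j) := by
    unfold witten
    rw [hFteq, conv_lap hFtsm ht, inner_grads]
    congr 1
    refine Finset.sum_congr rfl fun j _ => ?_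
    rw [conv_fderiv hFtsm ht (ee n j)]
    rfl
  have HD : deriv (fun s => F s x) t = DJ Ft (t, x) (τJ n) := by
    have ev : (fun s => F s x) =ᶠ[nhds t] (fun s => Ft (s, x)) := by
      filter_upwards [eventually_gt_nhds ht] with s hs
      exact hFrep s hs x
    rw [ev.deriv_eq]
    exact conv_deriv hFtsm ht
  have HN : hessNormSq n (f t) x = ∑ i, ∑ j, (DJ2 L (t, x) (εJ n i) (εJ n j)) ^ 2 := by
    unfold hessNormSq
    refine Finset.sum_congr rfl fun i _ => Finset.sum_congr rfl fun j _ => ?_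
    rw [hfs t]
    exact congrArg (· ^ 2) (conv_hess hL ht i j)
  have HIP : ⟪gradient (F t) x, gradient (f t) x⟫
      = ∑ i, DJ Ft (t, x) (εJ n i) * DJ L (t, x) (εJ n i) := by
    rw [hFteq, hfs t, inner_grads]
    refine Finset.sum_congr rfl fun i _ => ?_
    rw [conv_fderiv hFtsm ht (ee n i), conv_fderiv hL ht (ee n i)]
    rfl
  have Hphi : hess n φ x (gradient (f t) x) (gradient (f t) x)
      = ∑ i, ∑ j, DJ L (t, x) (εJ n i) * DJ L (t, x) (εJ n j)
          * hess n φ x (ee n i) (ee n j) := by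
    rw [hess_bilin hφ]
    refine Finset.sum_congr rfl fun i _ => Finset.sum_congr rfl fun j _ => ?_
    rw [grad_coord, grad_coord, hfs t, conv_fderiv hL ht (ee n i),
      conv_fderiv hL ht (ee n j)]
    rfl
  have Hnorm : ‖gradient (f t) x‖ ^ 2 = ∑ i, (DJ L (t, x) (εJ n i)) ^ 2 := by
    rw [hfs t, norm_grad_sq]
    refine Finset.sum_congr rfl fun i _ => ?_
    rw [conv_fderiv hL ht (ee n i)]
    rfl
  have HFval : F t x = t * Real.exp (-4 * K * t) * (∑ i, (DJ L (t, x) (εJ n i)) ^ 2)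
      - t * Real.exp (-2 * K * t) * DJ L (t, x) (τJ n) := by
    rw [hFrep t ht x, hFtdef]
  rw [HW, HD, HN, HIP, Hphi, Hnorm, HFval, HAt]
  simp only [HA3, HA1 (t, x) ht]
  have halg := final_algebra n K t (t * Real.exp (-4 * K * t)) (t * Real.exp (-2 * K * t))
    (deriv (fun s : ℝ => s * Real.exp (-4 * K * s)) t)
    (deriv (fun s : ℝ => s * Real.exp (-2 * K * s)) t)
    (DJ L (t, x) (τJ n)) (DJ2 L (t, x) (τJ n) (τJ n))
    (fun i => DJ L (t, x) (εJ n i))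
    (fun i => DJ2 L (t, x) (τJ n) (εJ n i))
    (fun j => DJ3 L (t, x) (εJ n j) (εJ n j) (τJ n))
    (fun i => fderiv ℝ φ x (ee n i))
    (fun i j => DJ2 L (t, x) (εJ n i) (εJ n j))
    (fun i j => DJ3 L (t, x) (εJ n i) (εJ n i) (εJ n j))
    (fun i j => hess n φ x (ee n i) (ee n j))
    hne ha' hb' hsymL hR2' hR3'
  linear_combination halg
end conv
end
end
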